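/- arXiv:2209.10476 — 8 statements merged into one kernel-verified Lean document; each statement's English description precedes it below -/
import Mathlib

section
/- Let G and H be graph classes with 0 < ρ_G < ∞ and ρ_G ≤ ρ_H. If G has a growth constant (i.e., (|G_n|/n!)^{1/n} → ρ_G^{-1}), then the labelled product G ⊗ H has growth constant ρ_G^{-1}. -/
open Filter

/-- Auxiliary: the labelled-product coefficient identity. -/
lemma stmt4_sum_div (a b : ℕ → ℕ) (n : ℕ) :
    ((∑ k ∈ Finset.range (n + 1), n.choose k * a k * b (n - k) : ℕ) : ℝ) /
        (Nat.factorial n : ℝ)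
      = ∑ k ∈ Finset.range (n + 1),
          ((a k : ℝ) / (Nat.factorial k : ℝ)) *
            ((b (n - k) : ℝ) / (Nat.factorial (n - k) : ℝ)) := by
  push_cast
  rw [Finset.sum_div]
  refine Finset.sum_congr rfl fun k hk => ?_
  have hk' : k ≤ n := Nat.lt_succ_iff.mp (Finset.mem_range.mp hk)
  have h := Nat.choose_mul_factorial_mul_factorial hk'
  have h' : ((n.choose k : ℝ)) * (Nat.factorial k : ℝ) * (Nat.factorial (n - k) : ℝ)
      = (Nat.factorial n : ℝ) := by exact_mod_cast congrArg Nat.cast h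
  have hkf : (0 : ℝ) < (Nat.factorial k : ℝ) := by positivity
  have hnkf : (0 : ℝ) < (Nat.factorial (n - k) : ℝ) := by positivity
  have hnf : (0 : ℝ) < (Nat.factorial n : ℝ) := by positivity
  rw [div_mul_div_comm, div_eq_div_iff hnf.ne' (by positivity)]
  linear_combination ((a k : ℝ) * (b (n - k) : ℝ)) * h'

/-- Auxiliary: from an eventual geometric bound, get a uniform geometric bound. -/
lemma stmt4_exists_geom_bound (X : ℕ → ℝ) (hX : ∀ n, 0 ≤ X n) {s : ℝ} (hs : 0 < s)
    (h : ∀ᶠ n in atTop, X n ≤ s ^ n) : ∃ C : ℝ, 1 ≤ C ∧ ∀ n, X n ≤ C * s ^ n := by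
  obtain ⟨N, hN⟩ := eventually_atTop.mp h
  have hsum : (0 : ℝ) ≤ ∑ k ∈ Finset.range N, X k / s ^ k := by
    exact Finset.sum_nonneg fun k _ => div_nonneg (hX k) (by positivity)
  refine ⟨1 + ∑ k ∈ Finset.range N, X k / s ^ k, by linarith, fun n => ?_⟩
  rcases lt_or_ge n N with hn | hn
  · have h1 : X n / s ^ n ≤ ∑ k ∈ Finset.range N, X k / s ^ k :=
      Finset.single_le_sum (f := fun k => X k / s ^ k)
        (fun k _ => div_nonneg (hX k) (by positivity)) (Finset.mem_range.mpr hn)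
    have h2 : X n = (X n / s ^ n) * s ^ n := by field_simp
    rw [h2]
    have hsn : (0 : ℝ) < s ^ n := by positivity
    have : X n / s ^ n ≤ 1 + ∑ k ∈ Finset.range N, X k / s ^ k := by linarith
    exact mul_le_mul_of_nonneg_right this hsn.le
  · calc X n ≤ s ^ n := hN n hn
      _ ≤ (1 + ∑ k ∈ Finset.range N, X k / s ^ k) * s ^ n := by
          nlinarith [pow_pos hs n]

/-- Auxiliary: `((n+1) * D) ^ (1/n) → 1` for `D > 0`. -/
lemma stmt4_aux_tendsto (D : ℝ) (hD : 0 < D) :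
    Tendsto (fun n : ℕ => (((n : ℝ) + 1) * D) ^ ((1 : ℝ) / (n : ℝ))) atTop (nhds 1) := by
  have h1 : Tendsto (fun n : ℕ => ((n : ℝ) + 1) ^ ((1 : ℝ) / (n : ℝ))) atTop (nhds 1) := by
    have hcomp := (tendsto_rpow_div_mul_add 1 1 (-1) zero_ne_one).comp
      (tendsto_atTop_add_const_right atTop (1 : ℝ) tendsto_natCast_atTop_atTop)
    refine hcomp.congr fun n => ?_
    simp only [Function.comp_apply]
    norm_num
  have h2 : Tendsto (fun n : ℕ => D ^ ((1 : ℝ) / (n : ℝ))) atTop (nhds 1) := by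
    have hlog : Tendsto (fun n : ℕ => Real.log D * ((1 : ℝ) / (n : ℝ))) atTop (nhds 0) := by
      simpa using tendsto_const_nhds.mul (tendsto_one_div_atTop_nhds_zero_nat (𝕜 := ℝ))
    have hexp := (Real.continuous_exp.tendsto 0).comp hlog
    rw [Real.exp_zero] at hexp
    refine hexp.congr fun n => ?_
    simp only [Function.comp_apply]
    rw [Real.rpow_def_of_pos hD]
  have := h1.mul h2
  rw [one_mul] at this
  refine this.congr fun n => ?_
  rw [← Real.mul_rpow (by positivity) hD.le]

/-- Let `a`, `b` be the counting sequences of graph classes `G`, `H` with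
`0 < ρ_G < ∞` and `ρ_G ≤ ρ_H` (the latter expressed as
`limsup (b n / n!)^(1/n) ≤ ρ_G⁻¹`), where `b 0 > 0` (the class `H` contains the null
graph).  If `G` has growth constant `ρ_G⁻¹`, then the labelled product, with counts
`c n = ∑ k (n choose k) a k * b (n-k)`, has growth constant `ρ_G⁻¹`. -/
theorem stmt_4 (a b : ℕ → ℕ) (ρ : ℝ) (hρpos : 0 < ρ) (hb0 : 0 < b 0)
    (hρa : limsup (fun n : ℕ =>
        ((((a n : ℝ) / (Nat.factorial n : ℝ)) ^ ((1 : ℝ) / (n : ℝ)) : ℝ) : EReal)) atTop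
        = ((ρ⁻¹ : ℝ) : EReal))
    (hρb : limsup (fun n : ℕ =>
        ((((b n : ℝ) / (Nat.factorial n : ℝ)) ^ ((1 : ℝ) / (n : ℝ)) : ℝ) : EReal)) atTop
        ≤ ((ρ⁻¹ : ℝ) : EReal))
    (hgc : Tendsto (fun n : ℕ => ((a n : ℝ) / (Nat.factorial n : ℝ)) ^ ((1 : ℝ) / (n : ℝ)))
        atTop (nhds ρ⁻¹)) :
    Tendsto (fun n : ℕ =>
        (((∑ k ∈ Finset.range (n + 1), n.choose k * a k * b (n - k) : ℕ) : ℝ) /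
          (Nat.factorial n : ℝ)) ^ ((1 : ℝ) / (n : ℝ)))
      atTop (nhds ρ⁻¹) := by
  have hρinv : (0 : ℝ) < ρ⁻¹ := inv_pos.mpr hρpos
  set X : ℕ → ℝ := fun n => (a n : ℝ) / (Nat.factorial n : ℝ) with hXdef
  set Y : ℕ → ℝ := fun n => (b n : ℝ) / (Nat.factorial n : ℝ) with hYdef
  set Z : ℕ → ℝ := fun n =>
    ((∑ k ∈ Finset.range (n + 1), n.choose k * a k * b (n - k) : ℕ) : ℝ) /
      (Nat.factorial n : ℝ) with hZdef
  have hXnn : ∀ n, 0 ≤ X n := fun n => by positivity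
  have hYnn : ∀ n, 0 ≤ Y n := fun n => by positivity
  have hZnn : ∀ n, 0 ≤ Z n := fun n => by positivity
  have hZeq : ∀ n, Z n = ∑ k ∈ Finset.range (n + 1), X k * Y (n - k) :=
    fun n => stmt4_sum_div a b n
  -- lower bound : X n ≤ Z n
  have hXZ : ∀ n, X n ≤ Z n := by
    intro n
    have hnat : a n ≤ ∑ k ∈ Finset.range (n + 1), n.choose k * a k * b (n - k) := by
      have hmem : n ∈ Finset.range (n + 1) := Finset.self_mem_range_succ n
      have := Finset.single_le_sum
        (f := fun k => n.choose k * a k * b (n - k)) (fun k _ => Nat.zero_le _) hmem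
      have h1 : a n ≤ n.choose n * a n * b (n - n) := by
        simp only [Nat.choose_self, Nat.sub_self, one_mul]
        calc a n = a n * 1 := (mul_one _).symm
          _ ≤ a n * b 0 := Nat.mul_le_mul_left _ hb0
      exact le_trans h1 this
    have : (a n : ℝ) ≤
        ((∑ k ∈ Finset.range (n + 1), n.choose k * a k * b (n - k) : ℕ) : ℝ) := by
      exact_mod_cast hnat
    exact div_le_div_of_nonneg_right this (by positivity) |>.trans_eq rfl
  rw [Metric.tendsto_nhds]
  intro ε hε
  set s : ℝ := ρ⁻¹ + ε / 2 with hsdef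
  have hs : 0 < s := by positivity
  -- eventual bounds
  have hXev : ∀ᶠ n in atTop, X n ^ ((1 : ℝ) / (n : ℝ)) < s :=
    hgc.eventually_lt_const (by simp only [hsdef]; linarith)
  have hYev : ∀ᶠ n in atTop, Y n ^ ((1 : ℝ) / (n : ℝ)) < s := by
    have hlt : limsup (fun n : ℕ =>
        (((Y n) ^ ((1 : ℝ) / (n : ℝ)) : ℝ) : EReal)) atTop < ((s : ℝ) : EReal) :=
      lt_of_le_of_lt hρb (EReal.coe_lt_coe_iff.mpr (by simp only [hsdef]; linarith))
    filter_upwards [Filter.eventually_lt_of_limsup_lt hlt] with n hn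
    exact EReal.coe_lt_coe_iff.mp hn
  have hpow : ∀ (W : ℕ → ℝ), (∀ n, 0 ≤ W n) →
      (∀ᶠ n in atTop, W n ^ ((1 : ℝ) / (n : ℝ)) < s) →
      (∀ᶠ n in atTop, W n ≤ s ^ n) := by
    intro W hWnn hWev
    filter_upwards [hWev, eventually_ge_atTop 1] with n h hn
    have hne : n ≠ 0 := by omega
    have hEq : (W n ^ ((1 : ℝ) / (n : ℝ))) ^ n = W n := by
      rw [one_div, Real.rpow_inv_natCast_pow (hWnn n) hne]
    calc W n = (W n ^ ((1 : ℝ) / (n : ℝ))) ^ n := hEq.symm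
      _ ≤ s ^ n := pow_le_pow_left₀ (Real.rpow_nonneg (hWnn n) _) h.le n
  obtain ⟨Cx, hCx1, hCx⟩ := stmt4_exists_geom_bound X hXnn hs (hpow X hXnn hXev)
  obtain ⟨Cy, hCy1, hCy⟩ := stmt4_exists_geom_bound Y hYnn hs (hpow Y hYnn hYev)
  set D : ℝ := Cx * Cy with hDdef
  have hD1 : 1 ≤ D := by nlinarith
  have hZbound : ∀ n, Z n ≤ ((n : ℝ) + 1) * D * s ^ n := by
    intro n
    rw [hZeq n]
    have hterm : ∀ k ∈ Finset.range (n + 1), X k * Y (n - k) ≤ D * s ^ n := by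
      intro k hk
      have hk' : k ≤ n := Nat.lt_succ_iff.mp (Finset.mem_range.mp hk)
      have h1 : X k * Y (n - k) ≤ (Cx * s ^ k) * (Cy * s ^ (n - k)) :=
        mul_le_mul (hCx k) (hCy (n - k)) (hYnn (n - k)) (by positivity)
      have h2 : (Cx * s ^ k) * (Cy * s ^ (n - k)) = D * s ^ n := by
        rw [hDdef]
        rw [show Cx * s ^ k * (Cy * s ^ (n - k)) = Cx * Cy * (s ^ k * s ^ (n - k)) by ring,
          ← pow_add, Nat.add_sub_cancel' hk']
      linarith [h1, h2.le]
    calc ∑ k ∈ Finset.range (n + 1), X k * Y (n - k)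
        ≤ ∑ _k ∈ Finset.range (n + 1), D * s ^ n := Finset.sum_le_sum hterm
      _ = ((n : ℝ) + 1) * (D * s ^ n) := by
          rw [Finset.sum_const, Finset.card_range, nsmul_eq_mul]
          push_cast
          ring
      _ = ((n : ℝ) + 1) * D * s ^ n := by ring
  -- upper bound eventually
  have hlim : Tendsto (fun n : ℕ => (((n : ℝ) + 1) * D) ^ ((1 : ℝ) / (n : ℝ)) * s)
      atTop (nhds s) := by
    simpa using (stmt4_aux_tendsto D (by linarith)).mul_const s
  have hupper : ∀ᶠ n in atTop, Z n ^ ((1 : ℝ) / (n : ℝ)) < ρ⁻¹ + ε := by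
    have hev := hlim.eventually_lt_const (show s < ρ⁻¹ + ε by simp only [hsdef]; linarith)
    filter_upwards [hev, eventually_ge_atTop 1] with n h hn
    have hne : n ≠ 0 := by omega
    have hexp : (0 : ℝ) ≤ (1 : ℝ) / (n : ℝ) := by positivity
    calc Z n ^ ((1 : ℝ) / (n : ℝ))
        ≤ (((n : ℝ) + 1) * D * s ^ n) ^ ((1 : ℝ) / (n : ℝ)) :=
          Real.rpow_le_rpow (hZnn n) (hZbound n) hexp
      _ = (((n : ℝ) + 1) * D) ^ ((1 : ℝ) / (n : ℝ)) * (s ^ n) ^ ((1 : ℝ) / (n : ℝ)) :=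
          Real.mul_rpow (by positivity) (by positivity)
      _ = (((n : ℝ) + 1) * D) ^ ((1 : ℝ) / (n : ℝ)) * s := by
          rw [one_div, Real.pow_rpow_inv_natCast hs.le hne]
      _ < ρ⁻¹ + ε := h
  -- lower bound eventually
  have hlower : ∀ᶠ n in atTop, ρ⁻¹ - ε < Z n ^ ((1 : ℝ) / (n : ℝ)) := by
    filter_upwards [hgc.eventually_const_lt (show ρ⁻¹ - ε < ρ⁻¹ by linarith)] with n h
    have : X n ^ ((1 : ℝ) / (n : ℝ)) ≤ Z n ^ ((1 : ℝ) / (n : ℝ)) :=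
      Real.rpow_le_rpow (hXnn n) (hXZ n) (by positivity)
    exact lt_of_lt_of_le h this
  filter_upwards [hupper, hlower] with n h1 h2
  rw [Real.dist_eq, abs_sub_lt_iff]
  constructor <;> linarith
end

section
/- Let G and H be graph classes with 0 < ρ_G < ρ_H. If G is smooth (n|G_{n-1}|/|G_n| → ρ_G), then the labelled product G ⊗ H is smooth with the same radius of convergence ρ_G. -/
open Filter Finset


lemma aux_ratio_pow {A : ℕ → ℝ} {ρ : ℝ}
    (hApos : ∀ᶠ n in atTop, 0 < A n)
    (hA : Tendsto (fun n => A n / A (n+1)) atTop (nhds ρ)) :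
    ∀ k : ℕ, Tendsto (fun n => A n / A (n+k)) atTop (nhds (ρ^k)) := by
  intro k
  induction k with
  | zero =>
    have : ∀ᶠ n in atTop, A n / A (n+0) = 1 := by
      filter_upwards [hApos] with n hn
      simp [hn.ne']
    simpa using Tendsto.congr' (this.mono fun n h => h.symm) tendsto_const_nhds
  | succ k ih =>
    have h2 : Tendsto (fun n => A n / A (n+k) * (A (n+k) / A (n+k+1))) atTop
        (nhds (ρ^k * ρ)) := by
      refine ih.mul ?_
      exact hA.comp (tendsto_add_atTop_nat k)
    have heq : ∀ᶠ n in atTop, A n / A (n+k) * (A (n+k) / A (n+k+1)) = A n / A (n+(k+1)) := by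
      filter_upwards [(tendsto_add_atTop_nat k).eventually hApos] with n hn
      rw [div_mul_div_comm, mul_comm (A n) (A (n+k)), mul_div_mul_left _ _ hn.ne']
      ring_nf
    rw [pow_succ]
    exact Tendsto.congr' heq h2

lemma aux_ratio_sub {A : ℕ → ℝ} {ρ : ℝ}
    (hApos : ∀ᶠ n in atTop, 0 < A n)
    (hA : Tendsto (fun n => A n / A (n+1)) atTop (nhds ρ)) (k : ℕ) :
    Tendsto (fun n => A (n-k) / A n) atTop (nhds (ρ^k)) := by
  have := (aux_ratio_pow hApos hA k).comp (tendsto_sub_atTop_nat k)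
  refine Tendsto.congr' ?_ this
  filter_upwards [eventually_ge_atTop k] with n hn
  simp only [Function.comp]
  rw [Nat.sub_add_cancel hn]

lemma aux_geom {A : ℕ → ℝ} {q : ℝ} (hq : 0 < q) (N : ℕ)
    (hstep : ∀ n ≥ N, A n ≤ q * A (n+1)) :
    ∀ n ≥ N, ∀ m, N ≤ m → m ≤ n → A m ≤ q^(n-m) * A n := by
  intro n hn
  induction n with
  | zero => intro m h1 h2; interval_cases m; simp
  | succ n ih =>
    intro m h1 h2
    rcases eq_or_lt_of_le h2 with rfl | h2'
    · simp
    · have hmn : m ≤ n := Nat.lt_succ_iff.mp h2'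
      rcases le_or_gt N n with hNn | hNn
      · calc A m ≤ q^(n-m) * A n := ih hNn m h1 hmn
          _ ≤ q^(n-m) * (q * A (n+1)) :=
              mul_le_mul_of_nonneg_left (hstep n hNn) (by positivity)
          _ = q^(n+1-m) * A (n+1) := by
              rw [Nat.succ_sub hmn, pow_succ]; ring
      · omega

lemma aux_main {A B : ℕ → ℝ} {ρ q : ℝ} (hρ : 0 < ρ) (hq : ρ < q)
    (hAnn : ∀ n, 0 ≤ A n) (hBnn : ∀ n, 0 ≤ B n)
    (hApos : ∀ᶠ n in atTop, 0 < A n)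
    (hA : Tendsto (fun n => A n / A (n+1)) atTop (nhds ρ))
    (hBsum : Summable (fun k => B k * q ^ k)) :
    Tendsto (fun n => (∑ k ∈ range (n+1), B k * A (n-k)) / A n) atTop
      (nhds (∑' k, B k * ρ ^ k)) := by
  have hq0 : 0 < q := hρ.trans hq
  -- choose N with positivity and step bound
  have hstep' : ∀ᶠ n in atTop, A n ≤ q * A (n+1) := by
    filter_upwards [hA.eventually (gt_mem_nhds hq),
      (tendsto_add_atTop_nat 1).eventually hApos] with n h1 h2
    have := (div_lt_iff₀ h2).mp h1
    linarith
  obtain ⟨N0, hN0⟩ := eventually_atTop.mp hApos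
  obtain ⟨N1, hN1⟩ := eventually_atTop.mp hstep'
  set N := max N0 N1 with hN
  have hNpos : ∀ n, N ≤ n → 0 < A n := fun n hn => hN0 n (le_trans (le_max_left _ _) hn)
  have hNstep : ∀ n ≥ N, A n ≤ q * A (n+1) := fun n hn => hN1 n (le_trans (le_max_right _ _) hn)
  have hgeom := aux_geom hq0 N hNstep
  set K := (∑ m ∈ range N, A m) + 1 with hK
  have hK1 : (1:ℝ) ≤ K := by
    have : 0 ≤ ∑ m ∈ range N, A m := Finset.sum_nonneg fun m _ => hAnn m
    simp [hK]; linarith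
  have hKb : ∀ m, m < N → A m ≤ K := by
    intro m hm
    have : A m ≤ ∑ m ∈ range N, A m :=
      Finset.single_le_sum (fun i _ => hAnn i) (Finset.mem_range.mpr hm)
    linarith
  set M := max 1 (q^N)⁻¹ with hM
  have hM0 : 0 < M := lt_of_lt_of_le one_pos (le_max_left _ _)
  set D := max 1 (K * M / A N) with hD
  have hD1 : (1:ℝ) ≤ D := le_max_left _ _
  have hD0 : 0 < D := lt_of_lt_of_le one_pos hD1
  -- key domination
  have hdom : ∀ n, N ≤ n → ∀ k, k ≤ n → A (n-k) ≤ D * q^k * A n := by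
    intro n hn k hk
    rcases le_or_gt N (n-k) with hcase | hcase
    · -- n - k ≥ N : geometric bound
      have h := hgeom n hn (n-k) hcase (Nat.sub_le n k)
      have hnk : n - (n - k) = k := by omega
      rw [hnk] at h
      calc A (n-k) ≤ q^k * A n := h
        _ ≤ D * (q^k * A n) := le_mul_of_one_le_left (mul_nonneg (pow_nonneg hq0.le k) (hAnn n)) hD1
        _ = D * q^k * A n := (mul_assoc _ _ _).symm
    · -- n - k < N
      have h1 : A (n-k) ≤ K := hKb _ hcase
      have h2 : A N ≤ q^(n-N) * A n := hgeom n hn N le_rfl hn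
      have hANpos : 0 < A N := hNpos N le_rfl
      -- q^(n-N) ≤ q^k * M
      have h3 : q^(n-N) ≤ q^k * M := by
        set j := k - (n - N) with hj
        have hjN : j ≤ N := by omega
        have hjk : j ≤ k := by omega
        have hsplit : q^(n-N) * q^j = q^k := by
          rw [← pow_add]; congr 1; omega
        have hqinv : (q^j)⁻¹ ≤ M := by
          rcases le_or_gt 1 q with hq1 | hq1
          · have : (1:ℝ) ≤ q^j := one_le_pow₀ hq1
            calc (q^j)⁻¹ ≤ 1 := inv_le_one_of_one_le₀ this
              _ ≤ M := le_max_left _ _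
          · have : q^N ≤ q^j := pow_le_pow_of_le_one hq0.le hq1.le hjN
            calc (q^j)⁻¹ ≤ (q^N)⁻¹ := by
                  apply inv_anti₀ (pow_pos hq0 N) this
              _ ≤ M := le_max_right _ _
        have hqj : 0 < q^j := pow_pos hq0 j
        calc q^(n-N) = q^k * (q^j)⁻¹ := by
              field_simp [← hsplit]
              exact hsplit
          _ ≤ q^k * M := mul_le_mul_of_nonneg_left hqinv (by positivity)
      -- combine
      have hAn : A N / q^(n-N) ≤ A n := by
        rw [div_le_iff₀ (pow_pos hq0 _)]
        linarith [h2, mul_comm (q^(n-N)) (A n)]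
      have hDK : K ≤ D * q^k * A n := by
        have hDge : K * M / A N ≤ D := le_max_right _ _
        have step1 : K * M ≤ D * A N := by
          rw [div_le_iff₀ hANpos] at hDge; linarith
        -- K ≤ K * M * q^k / q^(n-N) ≤ D * A N * q^k / q^(n-N) ≤ D q^k A n
        have hqnN : 0 < q^(n-N) := pow_pos hq0 _
        have e1 : K * q^(n-N) ≤ K * (q^k * M) :=
          mul_le_mul_of_nonneg_left h3 (by linarith)
        have e2 : K * (q^k * M) ≤ D * A N * q^k := by
          have := mul_le_mul_of_nonneg_right step1 (pow_nonneg hq0.le k)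
          nlinarith [pow_nonneg hq0.le k]
        have e3 : D * A N * q^k ≤ D * q^k * (q^(n-N) * A n) := by
          have := mul_le_mul_of_nonneg_left h2 (by positivity : (0:ℝ) ≤ D * q^k)
          nlinarith [pow_nonneg hq0.le k, hD0.le]
        nlinarith [hqnN]
      linarith
  -- the family F
  set F : ℕ → ℕ → ℝ := fun n k => if k ≤ n then B k * (A (n-k) / A n) else 0 with hF
  have hFsum : ∀ n, N ≤ n → (∑ k ∈ range (n+1), B k * A (n-k)) / A n = ∑' k, F n k := by
    intro n hn
    rw [tsum_eq_sum (s := range (n+1)) (f := F n)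
      (by
        intro k hk
        have hkn : ¬ k ≤ n := by simpa [Nat.lt_succ_iff] using hk
        simp [hF, hkn])]
    rw [Finset.sum_div]
    apply Finset.sum_congr rfl
    intro k hk
    have : k ≤ n := by simpa using Nat.lt_succ_iff.mp (mem_range.mp hk)
    simp [hF, this, mul_div_assoc]
  -- pointwise limits
  have hpt : ∀ k, Tendsto (fun n => F n k) atTop (nhds (B k * ρ^k)) := by
    intro k
    have := (aux_ratio_sub hApos hA k).const_mul (B k)
    refine Tendsto.congr' ?_ this
    filter_upwards [eventually_ge_atTop k] with n hn
    simp [hF, hn]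
  -- bound
  have hbd : ∀ᶠ n in atTop, ∀ k, ‖F n k‖ ≤ D * (B k * q^k) := by
    filter_upwards [eventually_ge_atTop N] with n hn k
    rcases le_or_gt k n with hk | hk
    · have hF0 : F n k = B k * (A (n-k) / A n) := by simp [hF, hk]
      have hAn : 0 < A n := hNpos n hn
      have : A (n-k) / A n ≤ D * q^k := by
        rw [div_le_iff₀ hAn]
        calc A (n-k) ≤ D * q^k * A n := hdom n hn k hk
          _ = D * q^k * A n := rfl
      rw [hF0, Real.norm_eq_abs,
        abs_of_nonneg (mul_nonneg (hBnn k) (div_nonneg (hAnn _) hAn.le))]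
      calc B k * (A (n-k) / A n) ≤ B k * (D * q^k) :=
            mul_le_mul_of_nonneg_left this (hBnn k)
        _ = D * (B k * q^k) := by ring
    · have hkn : ¬ k ≤ n := by omega
      have : F n k = 0 := by simp [hF, hkn]
      rw [this, norm_zero]
      exact mul_nonneg hD0.le (mul_nonneg (hBnn k) (pow_nonneg hq0.le k))
  have := tendsto_tsum_of_dominated_convergence (hBsum.mul_left D) hpt hbd
  refine Tendsto.congr' ?_ this
  filter_upwards [eventually_ge_atTop N] with n hn
  exact (hFsum n hn).symm

lemma aux_conv (a b : ℕ → ℕ) (n : ℕ) :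
    ((∑ k ∈ range (n+1), n.choose k * a k * b (n-k) : ℕ) : ℝ) / (n.factorial : ℝ)
      = ∑ k ∈ range (n+1),
          ((b k : ℝ)/(k.factorial : ℝ)) * ((a (n-k) : ℝ)/((n-k).factorial : ℝ)) := by
  have step : ((∑ k ∈ range (n+1), n.choose k * a k * b (n-k) : ℕ) : ℝ) / (n.factorial : ℝ)
      = ∑ k ∈ range (n+1),
          ((a k : ℝ)/(k.factorial : ℝ)) * ((b (n-k) : ℝ)/((n-k).factorial : ℝ)) := by
    push_cast
    rw [Finset.sum_div]
    apply Finset.sum_congr rfl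
    intro k hk
    have hkn : k ≤ n := Nat.lt_succ_iff.mp (mem_range.mp hk)
    have h := Nat.choose_mul_factorial_mul_factorial hkn
    have hr : (n.choose k : ℝ) * (k.factorial : ℝ) * ((n-k).factorial : ℝ)
        = (n.factorial : ℝ) := by exact_mod_cast congrArg (Nat.cast (R := ℝ)) h
    have h1 : (k.factorial : ℝ) ≠ 0 := Nat.cast_ne_zero.mpr k.factorial_ne_zero
    have h2 : ((n-k).factorial : ℝ) ≠ 0 := Nat.cast_ne_zero.mpr (n-k).factorial_ne_zero
    have h3 : (n.factorial : ℝ) ≠ 0 := Nat.cast_ne_zero.mpr n.factorial_ne_zero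
    field_simp
    linear_combination ((a k : ℝ) * (b (n-k) : ℝ)) * hr
  rw [step]
  have := Finset.sum_range_reflect
    (fun k => ((a k : ℝ)/(k.factorial : ℝ)) * ((b (n-k) : ℝ)/((n-k).factorial : ℝ))) (n+1)
  rw [← this]
  apply Finset.sum_congr rfl
  intro k hk
  have hkn : k ≤ n := Nat.lt_succ_iff.mp (mem_range.mp hk)
  have e1 : n + 1 - 1 - k = n - k := by omega
  have e2 : n - (n - k) = k := by omega
  rw [e1, e2, mul_comm]

lemma aux_Aratio (a : ℕ → ℕ) (n : ℕ) :
    ((a n : ℝ)/(n.factorial:ℝ)) / ((a (n+1) : ℝ)/((n+1).factorial:ℝ))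
      = (((n:ℝ)+1)) * (a n) / (a (n+1)) := by
  rcases eq_or_ne (a (n+1)) 0 with h | h
  · simp [h]
  · have h1 : (n.factorial : ℝ) ≠ 0 := Nat.cast_ne_zero.mpr n.factorial_ne_zero
    have h2 : ((n+1).factorial : ℝ) ≠ 0 := Nat.cast_ne_zero.mpr (n+1).factorial_ne_zero
    have h3 : ((a (n+1):ℕ) : ℝ) ≠ 0 := Nat.cast_ne_zero.mpr h
    rw [div_div_div_comm]
    rw [Nat.factorial_succ]
    field_simp
    push_cast; ring
lemma aux_ratio_fact (x y : ℝ) (n : ℕ) (hn : 1 ≤ n) :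
    (x/((n-1).factorial:ℝ)) / (y/(n.factorial:ℝ)) = (n:ℝ) * x / y := by
  rcases eq_or_ne y 0 with h | h
  · simp [h]
  · have h1 : ((n-1).factorial : ℝ) ≠ 0 := Nat.cast_ne_zero.mpr (n-1).factorial_ne_zero
    have h2 : (n.factorial : ℝ) ≠ 0 := Nat.cast_ne_zero.mpr n.factorial_ne_zero
    have h3 : (n.factorial : ℝ) = (n:ℝ) * ((n-1).factorial : ℝ) := by
      rw [← Nat.mul_factorial_pred (by omega : n ≠ 0)]; push_cast; ring
    field_simp
    rw [h3]; ring
lemma aux_rpow_inv (x : ℝ) (hx : 0 ≤ x) (n : ℕ) (hn : 1 ≤ n) :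
    (x ^ ((1:ℝ)/(n:ℝ))) ^ (n:ℕ) = x := by
  rw [← Real.rpow_natCast (x ^ ((1:ℝ)/(n:ℝ))) n, ← Real.rpow_mul hx]
  have hn' : ((n:ℝ)) ≠ 0 := Nat.cast_ne_zero.mpr (by omega)
  rw [one_div, inv_mul_cancel₀ hn']
  exact Real.rpow_one x
lemma aux_const_rpow (K : ℝ) (hK : 0 < K) :
    Tendsto (fun n : ℕ => K ^ ((1:ℝ)/(n:ℝ))) atTop (nhds 1) := by
  have h0 : Tendsto (fun n : ℕ => Real.log K * (1/(n:ℝ))) atTop (nhds 0) := by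
    simpa using (tendsto_one_div_atTop_nhds_zero_nat).const_mul (Real.log K)
  have := (Real.continuous_exp.tendsto 0).comp h0
  simp only [Real.exp_zero] at this
  refine this.congr fun n => ?_
  rw [Function.comp, Real.rpow_def_of_pos hK]

/-- Let `a`, `b` be the counting sequences of graph classes `G`, `H` with
`0 < ρ_G < ρ_H` (the latter expressed as `limsup (b n / n!)^(1/n) < ρ_G⁻¹`), where
`b 0 > 0` (the class `H` contains the null graph).  If `G` is smooth
(`n * a (n-1) / a n → ρ_G`), then the labelled product `G ⊗ H`, with counts
`c n = ∑ k (n choose k) a k * b (n-k)`, is smooth with the same radius of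
convergence `ρ_G`. -/
theorem stmt_5 (a b : ℕ → ℕ) (ρ : ℝ) (hρpos : 0 < ρ) (hb0 : 0 < b 0)
    (hpos : ∀ᶠ n in atTop, 0 < a n)
    (hρa : limsup (fun n : ℕ =>
        ((((a n : ℝ) / (Nat.factorial n : ℝ)) ^ ((1 : ℝ) / (n : ℝ)) : ℝ) : EReal)) atTop
        = ((ρ⁻¹ : ℝ) : EReal))
    (hρb : limsup (fun n : ℕ =>
        ((((b n : ℝ) / (Nat.factorial n : ℝ)) ^ ((1 : ℝ) / (n : ℝ)) : ℝ) : EReal)) atTop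
        < ((ρ⁻¹ : ℝ) : EReal))
    (hsmooth : Tendsto (fun n : ℕ => (n : ℝ) * (a (n - 1) : ℝ) / (a n : ℝ))
        atTop (nhds ρ)) :
    Tendsto (fun n : ℕ =>
        (n : ℝ) * ((∑ k ∈ Finset.range n, (n - 1).choose k * a k * b (n - 1 - k) : ℕ) : ℝ) /
          ((∑ k ∈ Finset.range (n + 1), n.choose k * a k * b (n - k) : ℕ) : ℝ))
      atTop (nhds ρ) ∧
    limsup (fun n : ℕ =>
        (((((∑ k ∈ Finset.range (n + 1), n.choose k * a k * b (n - k) : ℕ) : ℝ) /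
            (Nat.factorial n : ℝ)) ^ ((1 : ℝ) / (n : ℝ)) : ℝ) : EReal)) atTop
      = ((ρ⁻¹ : ℝ) : EReal) := by
  classical
  set A : ℕ → ℝ := fun n => (a n : ℝ)/(n.factorial : ℝ) with hAdef
  set B : ℕ → ℝ := fun n => (b n : ℝ)/(n.factorial : ℝ) with hBdef
  set c : ℕ → ℕ := fun n => ∑ k ∈ Finset.range (n+1), n.choose k * a k * b (n-k) with hcdef
  set C : ℕ → ℝ := fun n => (c n : ℝ)/(n.factorial : ℝ) with hCdef
  have hAnn : ∀ n, 0 ≤ A n := fun n => by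
    simp only [hAdef]; positivity
  have hBnn : ∀ n, 0 ≤ B n := fun n => by
    simp only [hBdef]; positivity
  have hCnn : ∀ n, 0 ≤ C n := fun n => by
    simp only [hCdef]; positivity
  have hApos : ∀ᶠ n in atTop, 0 < A n := by
    filter_upwards [hpos] with n hn
    simp only [hAdef]
    have h1 : (0:ℝ) < (a n : ℝ) := by exact_mod_cast hn
    have h2 : (0:ℝ) < (n.factorial : ℝ) := by exact_mod_cast n.factorial_pos
    positivity
  have hB0 : 0 < B 0 := by
    simp only [hBdef, Nat.factorial_zero, Nat.cast_one, div_one]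
    exact_mod_cast hb0
  have hConv : ∀ n, C n = ∑ k ∈ Finset.range (n+1), B k * A (n-k) := fun n => by
    simp only [hCdef, hcdef, hAdef, hBdef]
    exact aux_conv a b n
  -- smoothness of A-ratios
  have hA : Tendsto (fun n => A n / A (n+1)) atTop (nhds ρ) := by
    have h1 := hsmooth.comp (tendsto_add_atTop_nat 1)
    refine Tendsto.congr' ?_ h1
    refine Eventually.of_forall fun n => ?_
    simp only [Function.comp, Nat.add_sub_cancel]
    simp only [hAdef]
    rw [aux_Aratio a n]
    push_cast
    ring
  -- extract geometric bound for B
  have hρinv : (0:ℝ) < ρ⁻¹ := by positivity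
  obtain ⟨s, hs1, hs2⟩ := EReal.lt_iff_exists_real_btwn.mp hρb
  set s' : ℝ := max s (ρ⁻¹/2) with hs'def
  have hs'0 : (0:ℝ) < s' := lt_of_lt_of_le (by positivity) (le_max_right _ _)
  have hs'lt : s' < ρ⁻¹ := max_lt (by exact_mod_cast hs2) (by linarith)
  have hsle : limsup (fun n : ℕ =>
      ((((b n : ℝ) / (Nat.factorial n : ℝ)) ^ ((1 : ℝ) / (n : ℝ)) : ℝ) : EReal)) atTop
      < ((s' : ℝ) : EReal) :=
    lt_of_lt_of_le hs1 (EReal.coe_le_coe_iff.mpr (le_max_left _ _))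
  have hBev : ∀ᶠ n in atTop, B n < s'^n := by
    filter_upwards [eventually_lt_of_limsup_lt hsle, eventually_ge_atTop 1] with n h1 h2
    have h1' : (B n) ^ ((1:ℝ)/(n:ℝ)) < s' := by
      simp only [hBdef]
      exact_mod_cast h1
    calc B n = ((B n)^((1:ℝ)/(n:ℝ)))^(n:ℕ) := (aux_rpow_inv _ (hBnn n) n h2).symm
      _ < s'^n := pow_lt_pow_left₀ h1' (Real.rpow_nonneg (hBnn n) _) (by omega)
  set q : ℝ := (ρ + s'⁻¹)/2 with hqdef
  have hρs' : ρ < s'⁻¹ := by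
    have := (inv_lt_inv₀ hρinv hs'0).mpr hs'lt
    simpa using this
  have hρq : ρ < q := by rw [hqdef]; linarith
  have hq0 : (0:ℝ) < q := hρpos.trans hρq
  have hqs' : q * s' < 1 := by
    have hq2 : q < s'⁻¹ := by rw [hqdef]; linarith
    calc q * s' < s'⁻¹ * s' := by nlinarith
      _ = 1 := inv_mul_cancel₀ hs'0.ne'
  have hBsum : Summable (fun k => B k * q^k) := by
    obtain ⟨N, hN⟩ := eventually_atTop.mp hBev
    refine (summable_nat_add_iff N).mp ?_
    have hgeo : Summable (fun k : ℕ => (s'*q)^N * (s'*q)^k) :=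
      (summable_geometric_of_lt_one (by positivity)
        (by rw [mul_comm]; exact hqs')).mul_left _
    refine hgeo.of_nonneg_of_le
      (fun k => mul_nonneg (hBnn _) (pow_nonneg hq0.le _)) (fun k => ?_)
    have h1 : B (k+N) ≤ s'^(k+N) := (hN (k+N) (by omega)).le
    calc B (k+N) * q^(k+N) ≤ s'^(k+N) * q^(k+N) :=
          mul_le_mul_of_nonneg_right h1 (pow_nonneg hq0.le _)
      _ = (s'*q)^N * (s'*q)^k := by rw [← mul_pow, ← pow_add]; ring_nf
  -- main convergence
  set S : ℝ := ∑' k, B k * ρ^k with hSdef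
  have hmain : Tendsto (fun n => C n / A n) atTop (nhds S) := by
    have h0 := aux_main hρpos hρq hAnn hBnn hApos hA hBsum
    exact h0.congr fun n => by rw [← hConv n]
  have hSρsum : Summable (fun k => B k * ρ^k) :=
    hBsum.of_nonneg_of_le (fun k => mul_nonneg (hBnn k) (pow_nonneg hρpos.le _))
      (fun k => mul_le_mul_of_nonneg_left (pow_le_pow_left₀ hρpos.le hρq.le k) (hBnn k))
  have hSpos : 0 < S := by
    have h1 : B 0 * ρ^0 ≤ S := Summable.le_tsum hSρsum 0
      (fun j _ => mul_nonneg (hBnn j) (pow_nonneg hρpos.le _))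
    simp only [pow_zero, mul_one] at h1
    linarith [hB0]
  have hCpos : ∀ᶠ n in atTop, 0 < C n := by
    filter_upwards [hmain.eventually (lt_mem_nhds (half_lt_self hSpos)), hApos] with n h1 h2
    have h3 : 0 < C n / A n := lt_trans (by positivity) h1
    have := mul_pos h3 h2
    rwa [div_mul_cancel₀ _ h2.ne'] at this
  -- ratio limit for C
  have hCratio : Tendsto (fun n => C (n-1) / C n) atTop (nhds ρ) := by
    have t1 : Tendsto (fun n => C (n-1) / A (n-1)) atTop (nhds S) :=
      hmain.comp (tendsto_sub_atTop_nat 1)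
    have t2 : Tendsto (fun n => A (n-1) / A n) atTop (nhds ρ) := by
      simpa using aux_ratio_sub hApos hA 1
    have t4 := (t1.mul t2).div hmain hSpos.ne'
    have hq : S * ρ / S = ρ := by field_simp
    rw [hq] at t4
    refine Tendsto.congr' ?_ t4
    filter_upwards [(tendsto_sub_atTop_nat 1).eventually hApos, hApos, hCpos] with n h1 h2 h3
    rw [Pi.div_apply]
    field_simp
  -- Part 1
  have goal1 : Tendsto (fun n : ℕ =>
      (n : ℝ) * ((∑ k ∈ Finset.range n, (n - 1).choose k * a k * b (n - 1 - k) : ℕ) : ℝ) /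
        ((∑ k ∈ Finset.range (n + 1), n.choose k * a k * b (n - k) : ℕ) : ℝ))
      atTop (nhds ρ) := by
    refine Tendsto.congr' ?_ hCratio
    filter_upwards [eventually_ge_atTop 1] with n hn
    have hnum : (∑ k ∈ Finset.range n, (n - 1).choose k * a k * b (n - 1 - k) : ℕ)
        = c (n-1) := by
      simp only [hcdef]
      have h : n - 1 + 1 = n := by omega
      rw [h]
    have := aux_ratio_fact ((c (n-1) : ℕ) : ℝ) ((c n : ℕ) : ℝ) n hn
    simp only [hCdef]
    rw [this, hnum]
  refine ⟨goal1, ?_⟩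
  -- Part 2 : limsup
  have hfun : ∀ n : ℕ,
      (((((∑ k ∈ Finset.range (n + 1), n.choose k * a k * b (n - k) : ℕ) : ℝ) /
        (Nat.factorial n : ℝ)) ^ ((1 : ℝ) / (n : ℝ)) : ℝ) : EReal)
      = (((C n) ^ ((1 : ℝ) / (n : ℝ)) : ℝ) : EReal) := fun n => by
    simp only [hCdef, hcdef]
  -- lower bound
  have hlb : ((ρ⁻¹:ℝ):EReal)
      ≤ limsup (fun n : ℕ => (((C n) ^ ((1:ℝ)/(n:ℝ)) : ℝ) : EReal)) atTop := by
    rw [← hρa]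
    refine limsup_le_limsup (Eventually.of_forall fun n => ?_)
    have hac : a n ≤ c n := by
      simp only [hcdef]
      have hmem : n ∈ Finset.range (n+1) := Finset.mem_range.mpr (by omega)
      calc a n ≤ a n * b 0 := Nat.le_mul_of_pos_right _ hb0
        _ = n.choose n * a n * b (n - n) := by simp
        _ ≤ ∑ k ∈ Finset.range (n+1), n.choose k * a k * b (n-k) :=
            Finset.single_le_sum (f := fun k => n.choose k * a k * b (n-k))
              (fun i _ => Nat.zero_le _) hmem
    have hAC : A n ≤ C n := by
      simp only [hAdef, hCdef]
      have hf : (0:ℝ) < (n.factorial : ℝ) := by exact_mod_cast n.factorial_pos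
      exact (div_le_div_iff_of_pos_right hf).mpr (by exact_mod_cast hac)
    have hstep : (A n) ^ ((1:ℝ)/(n:ℝ)) ≤ (C n) ^ ((1:ℝ)/(n:ℝ)) :=
      Real.rpow_le_rpow (hAnn n) hAC (by positivity)
    exact EReal.coe_le_coe_iff.mpr (by simpa only [hAdef] using hstep)
  -- upper bound
  have hub : limsup (fun n : ℕ => (((C n) ^ ((1:ℝ)/(n:ℝ)) : ℝ) : EReal)) atTop
      ≤ ((ρ⁻¹:ℝ):EReal) := by
    refine le_of_forall_gt_imp_ge_of_dense fun w hw => ?_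
    obtain ⟨z, hz1, hz2⟩ := EReal.lt_iff_exists_real_btwn.mp hw
    have hz : ρ⁻¹ < z := by exact_mod_cast hz1
    have hz0 : 0 < z := lt_trans hρinv hz
    -- ratio inverse
    have hCinv : Tendsto (fun n => C n / C (n-1)) atTop (nhds ρ⁻¹) := by
      have := hCratio.inv₀ hρpos.ne'
      exact this.congr fun n => by rw [inv_div]
    have hstep : ∀ᶠ n in atTop, C (n+1) ≤ z * C n := by
      have h1 := (hCinv.comp (tendsto_add_atTop_nat 1)).eventually (gt_mem_nhds hz)
      filter_upwards [h1, hCpos] with n hlt hp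
      simp only [Function.comp, Nat.add_sub_cancel] at hlt
      have := (div_lt_iff₀ hp).mp hlt
      linarith
    obtain ⟨N, hNs⟩ := eventually_atTop.mp (hstep.and hCpos)
    have hCN : 0 < C N := (hNs N le_rfl).2
    have hCadd : ∀ m, C (N+m) ≤ C N * z^m := by
      intro m
      induction m with
      | zero => simp
      | succ m ih =>
        have h1 : C (N+m+1) ≤ z * C (N+m) := (hNs (N+m) (by omega)).1
        calc C (N+(m+1)) = C (N+m+1) := by ring_nf
          _ ≤ z * C (N+m) := h1
          _ ≤ z * (C N * z^m) := mul_le_mul_of_nonneg_left ih hz0.le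
          _ = C N * z^(m+1) := by ring
    set Kc : ℝ := C N / z^N with hKcdef
    have hKc : 0 < Kc := div_pos hCN (pow_pos hz0 _)
    have hCb : ∀ n ≥ N, C n ≤ Kc * z^n := by
      intro n hn
      have := hCadd (n - N)
      have he : N + (n - N) = n := by omega
      rw [he] at this
      calc C n ≤ C N * z^(n-N) := this
        _ = Kc * z^n := by
            have hzn : z^n = z^N * z^(n-N) := by rw [← pow_add]; congr 1; omega
            rw [hKcdef, hzn]
            field_simp
    have hle : ∀ᶠ n in atTop,
        (((C n)^((1:ℝ)/(n:ℝ)) : ℝ) : EReal) ≤ ((Kc^((1:ℝ)/(n:ℝ)) * z : ℝ) : EReal) := by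
      filter_upwards [eventually_ge_atTop N, eventually_ge_atTop 1] with n hn h1n
      have h1 : C n ≤ Kc * z^n := hCb n hn
      have h2 : (C n)^((1:ℝ)/(n:ℝ)) ≤ (Kc * z^n)^((1:ℝ)/(n:ℝ)) :=
        Real.rpow_le_rpow (hCnn n) h1 (by positivity)
      have h3 : (Kc * z^n)^((1:ℝ)/(n:ℝ)) = Kc^((1:ℝ)/(n:ℝ)) * z := by
        rw [Real.mul_rpow hKc.le (by positivity)]
        congr 1
        rw [← Real.rpow_natCast z n, ← Real.rpow_mul hz0.le]
        have hne : ((n:ℝ)) ≠ 0 := Nat.cast_ne_zero.mpr (by omega)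
        rw [mul_one_div, div_self hne, Real.rpow_one]
      exact EReal.coe_le_coe_iff.mpr (by rw [← h3]; exact h2)
    have hlim2 : Tendsto (fun n : ℕ => ((Kc^((1:ℝ)/(n:ℝ)) * z : ℝ):EReal)) atTop
        (nhds ((z:ℝ):EReal)) :=
      EReal.tendsto_coe.mpr (by simpa using (aux_const_rpow Kc hKc).mul_const z)
    calc limsup (fun n : ℕ => (((C n) ^ ((1:ℝ)/(n:ℝ)) : ℝ) : EReal)) atTop
        ≤ limsup (fun n : ℕ => ((Kc^((1:ℝ)/(n:ℝ)) * z : ℝ):EReal)) atTop :=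
          limsup_le_limsup hle
      _ = ((z:ℝ):EReal) := hlim2.limsup_eq
      _ ≤ w := hz2.le
  have hfe : (fun n : ℕ =>
      (((((∑ k ∈ Finset.range (n + 1), n.choose k * a k * b (n - k) : ℕ) : ℝ) /
        (Nat.factorial n : ℝ)) ^ ((1 : ℝ) / (n : ℝ)) : ℝ) : EReal))
      = fun n : ℕ => (((C n) ^ ((1:ℝ)/(n:ℝ)) : ℝ) : EReal) := funext hfun
  rw [hfe]
  exact le_antisymm hub hlb
end

section
/- Let G and H be graph classes with 0 < ρ_G < ρ_H, and suppose the labelled product G ⊗ H has a weak growth constant. Then G has a weak growth constant. -/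
open Filter

/-- The first element of `S` at or after `n`, minus `n`. -/
noncomputable def gapOf (S : Set ℕ) (n : ℕ) : ℕ := sInf {m | m ∈ S ∧ n ≤ m} - n

/-- `S` is infinite and `gap_S(n) = o(n)`. -/
def HasSublinearGaps (S : Set ℕ) : Prop :=
  S.Infinite ∧ Tendsto (fun n : ℕ => ((gapOf S n : ℕ) : ℝ) / (n : ℝ)) atTop (nhds 0)

/-- `n` is `(1-η)`-rich for the class with counts `a` and radius `ρ`. -/
noncomputable def IsRich (a : ℕ → ℕ) (ρ η : ℝ) (n : ℕ) : Prop :=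
  (1 - η) * ρ⁻¹ ≤ ((a n : ℝ) / (Nat.factorial n : ℝ)) ^ ((1 : ℝ) / (n : ℝ))

/-- The class with counts `a` and radius `ρ` has a weak growth constant. -/
def HasWeakGrowthConstant (a : ℕ → ℕ) (ρ : ℝ) : Prop :=
  ∀ η : ℝ, 0 < η → HasSublinearGaps {n | IsRich a ρ η n}

lemma gapOf_le {S : Set ℕ} {n k : ℕ} (hk : k ∈ S) (hnk : n ≤ k) : gapOf S n ≤ k - n := by
  have h1 : sInf {m | m ∈ S ∧ n ≤ m} ≤ k := Nat.sInf_le ⟨hk, hnk⟩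
  unfold gapOf
  omega

lemma gapOf_mem {S : Set ℕ} (hS : S.Infinite) (n : ℕ) :
    n + gapOf S n ∈ S ∧ n ≤ n + gapOf S n := by
  obtain ⟨k, hkS, hk⟩ := hS.exists_gt n
  have hne : {m | m ∈ S ∧ n ≤ m}.Nonempty := ⟨k, hkS, hk.le⟩
  have hmem := Nat.sInf_mem hne
  obtain ⟨h1, h2⟩ := hmem
  have : n + gapOf S n = sInf {m | m ∈ S ∧ n ≤ m} := by
    unfold gapOf; omega
  rw [this]
  exact ⟨h1, h2⟩


section Stmt6Aux
open Finset

lemma rpow_conv_le {x t : ℝ} (hx : 0 ≤ x) {n : ℕ} (hn : n ≠ 0)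
    (h : x ^ ((1:ℝ)/(n:ℝ)) ≤ t) : x ≤ t ^ n := by
  have hn' : ((n:ℝ)) ≠ 0 := Nat.cast_ne_zero.mpr hn
  have h2 := Real.rpow_le_rpow (Real.rpow_nonneg hx _) h (Nat.cast_nonneg n)
  rw [← Real.rpow_mul hx, one_div, inv_mul_cancel₀ hn', Real.rpow_one,
    Real.rpow_natCast] at h2
  exact h2

lemma pow_conv_le {x t : ℝ} (ht : 0 ≤ t) {n : ℕ} (hn : n ≠ 0)
    (h : t ^ n ≤ x) : t ≤ x ^ ((1:ℝ)/(n:ℝ)) := by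
  have hn' : ((n:ℝ)) ≠ 0 := Nat.cast_ne_zero.mpr hn
  have h2 := Real.rpow_le_rpow (pow_nonneg ht n) h
    (le_of_lt (one_div_pos.mpr (show (0:ℝ) < (n:ℝ) by exact_mod_cast Nat.pos_of_ne_zero hn)))
  rwa [← Real.rpow_natCast t n, ← Real.rpow_mul ht, mul_one_div, div_self hn',
    Real.rpow_one] at h2

lemma rpow_inv_pow {x : ℝ} (hx : 0 ≤ x) {n : ℕ} (hn : n ≠ 0) :
    (x ^ ((1:ℝ)/(n:ℝ))) ^ n = x := by
  have hn' : ((n:ℝ)) ≠ 0 := Nat.cast_ne_zero.mpr hn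
  rw [← Real.rpow_natCast (x ^ ((1:ℝ)/(n:ℝ))) n, ← Real.rpow_mul hx,
    one_div, inv_mul_cancel₀ hn', Real.rpow_one]

lemma exists_geom_bound (u : ℕ → ℝ) (hu : ∀ n, 0 ≤ u n) {t : ℝ} (ht : 0 < t)
    (h : ∀ᶠ n in atTop, u n ≤ t ^ n) : ∃ L : ℝ, 1 ≤ L ∧ ∀ n, u n ≤ L * t ^ n := by
  obtain ⟨N, hN⟩ := eventually_atTop.mp h
  have hL : (1:ℝ) ≤ 1 + ∑ i ∈ range N, u i / t ^ i := by
    have : (0:ℝ) ≤ ∑ i ∈ range N, u i / t ^ i :=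
      Finset.sum_nonneg (fun i _ => div_nonneg (hu i) (pow_nonneg ht.le i))
    linarith
  refine ⟨1 + ∑ i ∈ range N, u i / t ^ i, hL, fun n => ?_⟩
  rcases le_or_gt N n with hn | hn
  · calc u n ≤ t ^ n := hN n hn
      _ ≤ (1 + ∑ i ∈ range N, u i / t ^ i) * t ^ n :=
          le_mul_of_one_le_left (by positivity) hL
  · have h1 : u n / t ^ n ≤ ∑ i ∈ range N, u i / t ^ i :=
      Finset.single_le_sum (f := fun i => u i / t ^ i)
        (fun i _ => div_nonneg (hu i) (pow_nonneg ht.le i)) (mem_range.mpr hn)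
    have htn : t ^ n ≠ 0 := (pow_pos ht n).ne'
    have h2 : u n = u n / t ^ n * t ^ n := (div_mul_cancel₀ _ htn).symm
    rw [h2]
    exact mul_le_mul_of_nonneg_right (by linarith) (by positivity)

lemma conv_sum (a b : ℕ → ℕ) (n : ℕ) :
    ((∑ k ∈ range (n+1), n.choose k * a k * b (n-k) : ℕ) : ℝ) / (Nat.factorial n : ℝ)
      = ∑ k ∈ range (n+1), ((a k : ℝ) / (Nat.factorial k : ℝ)) *
          ((b (n-k) : ℝ) / (Nat.factorial (n-k) : ℝ)) := by
  push_cast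
  rw [Finset.sum_div]
  refine Finset.sum_congr rfl (fun k hk => ?_)
  have hkn : k ≤ n := Nat.lt_succ_iff.mp (mem_range.mp hk)
  have hc : (n.choose k : ℝ) = (Nat.factorial n : ℝ) /
      ((Nat.factorial k : ℝ) * (Nat.factorial (n-k) : ℝ)) := by
    rw [Nat.cast_choose ℝ hkn]
  rw [hc]
  have h1 : (Nat.factorial n : ℝ) ≠ 0 := Nat.cast_ne_zero.mpr (Nat.factorial_ne_zero n)
  have h2 : (Nat.factorial k : ℝ) ≠ 0 := Nat.cast_ne_zero.mpr (Nat.factorial_ne_zero k)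
  have h3 : (Nat.factorial (n-k) : ℝ) ≠ 0 := Nat.cast_ne_zero.mpr (Nat.factorial_ne_zero (n-k))
  field_simp

lemma aux_geom_s6 (C : ℝ) {x y : ℝ} (hx : 0 ≤ x) (hxy : x < y) (k : ℕ) :
    ∀ᶠ n : ℕ in atTop, C * ((n:ℝ)+1)^k * x^n < y^n := by
  have hy : 0 < y := lt_of_le_of_lt hx hxy
  have hr : x / y < 1 := (div_lt_one hy).mpr hxy
  have hr0 : 0 ≤ x / y := div_nonneg hx hy.le
  have hten : Tendsto (fun n : ℕ => ((n:ℝ))^k * (x/y)^n) atTop (nhds 0) := by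
    have := summable_pow_mul_geometric_of_norm_lt_one (R := ℝ) k
      (r := x / y) (by rwa [Real.norm_eq_abs, abs_of_nonneg hr0])
    exact this.tendsto_atTop_zero
  have hten2 : Tendsto (fun n : ℕ => C * ((n:ℝ)+1)^k * (x/y)^n) atTop (nhds 0) := by
    have hcomp : Tendsto (fun n : ℕ => ((n:ℝ)+1)^k * (x/y)^(n+1)) atTop (nhds 0) := by
      have h := hten.comp (tendsto_add_atTop_nat 1)
      refine Tendsto.congr (fun n => ?_) h
      simp only [Function.comp]
      push_cast
      ring
    rcases eq_or_lt_of_le hr0 with h0 | h0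
    · have : ∀ᶠ n : ℕ in atTop, C * ((n:ℝ)+1)^k * (x/y)^n = 0 := by
        filter_upwards [eventually_ge_atTop 1] with n hn
        rw [← h0, zero_pow (by omega), mul_zero]
      exact Tendsto.congr' (by filter_upwards [this] with n hn; rw [hn]) tendsto_const_nhds
    · have heq : ∀ n : ℕ, C * ((n:ℝ)+1)^k * (x/y)^n
          = (C / (x/y)) * (((n:ℝ)+1)^k * (x/y)^(n+1)) := by
        intro n
        have hx0 : x ≠ 0 := by
          intro h; rw [h] at h0; simp at h0
        have hy0 : y ≠ 0 := hy.ne'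
        rw [pow_succ]
        field_simp
      rw [funext heq]
      simpa using hcomp.const_mul (C / (x/y))
  filter_upwards [hten2.eventually_lt_const (by norm_num : (0:ℝ) < 1)] with n hn
  have hyn : 0 < y ^ n := pow_pos hy n
  have hxn : x ^ n = (x/y)^n * y^n := by
    rw [div_pow, div_mul_cancel₀]
    exact hyn.ne'
  rw [hxn, ← mul_assoc]
  calc C * ((n:ℝ)+1)^k * (x/y)^n * y^n < 1 * y^n := mul_lt_mul_of_pos_right hn hyn
    _ = y ^ n := one_mul _

set_option maxHeartbeats 1000000 in
lemma key (a b : ℕ → ℕ) (ρ : ℝ) (hρpos : 0 < ρ)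
    (hρa : limsup (fun n : ℕ =>
        ((((a n : ℝ) / (Nat.factorial n : ℝ)) ^ ((1 : ℝ) / (n : ℝ)) : ℝ) : EReal)) atTop
        = ((ρ⁻¹ : ℝ) : EReal))
    (hρb : limsup (fun n : ℕ =>
        ((((b n : ℝ) / (Nat.factorial n : ℝ)) ^ ((1 : ℝ) / (n : ℝ)) : ℝ) : EReal)) atTop
        < ((ρ⁻¹ : ℝ) : EReal))
    {q : ℕ} (hq : 2 ≤ q) {η : ℝ} (hη : 0 < η) (hη1 : η < 1) :
    ∃ η' : ℝ, 0 < η' ∧ ∀ᶠ n : ℕ in atTop,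
      IsRich (fun n => ∑ k ∈ Finset.range (n + 1), n.choose k * a k * b (n - k)) ρ η' n →
      ∃ k, n - (n/q + 1) ≤ k ∧ k ≤ n ∧ IsRich a ρ η k := by
  have hρinv : (0:ℝ) < ρ⁻¹ := inv_pos.mpr hρpos
  set A : ℕ → ℝ := fun n => (a n : ℝ) / (Nat.factorial n : ℝ) with hA
  set B : ℕ → ℝ := fun n => (b n : ℝ) / (Nat.factorial n : ℝ) with hB
  have hA0 : ∀ n, 0 ≤ A n := fun n => div_nonneg (Nat.cast_nonneg _) (Nat.cast_nonneg _)
  have hB0 : ∀ n, 0 ≤ B n := fun n => div_nonneg (Nat.cast_nonneg _) (Nat.cast_nonneg _)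
  -- τ
  obtain ⟨s, hs1, hs2⟩ : ∃ s : ℝ,
      limsup (fun n : ℕ => ((B n ^ ((1:ℝ)/(n:ℝ)) : ℝ) : EReal)) atTop < (s : EReal)
        ∧ s < ρ⁻¹ := by
    obtain ⟨z, hz1, hz2⟩ := exists_between hρb
    lift z to ℝ using ⟨ne_top_of_lt hz2, ne_bot_of_gt hz1⟩ with s
    exact ⟨s, hz1, by exact_mod_cast hz2⟩
  set τ : ℝ := max s (ρ⁻¹/2) with hτdef
  have hτpos : 0 < τ := lt_of_lt_of_le (by linarith) (le_max_right _ _)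
  have hτlt : τ < ρ⁻¹ := max_lt hs2 (by linarith)
  have hBev : ∀ᶠ n : ℕ in atTop, B n ≤ τ ^ n := by
    have h1 : ∀ᶠ n : ℕ in atTop, B n ^ ((1:ℝ)/(n:ℝ)) < s := by
      have := Filter.eventually_lt_of_limsup_lt hs1
      filter_upwards [this] with n hn
      exact_mod_cast hn
    filter_upwards [h1, eventually_ge_atTop 1] with n hn hn1
    exact rpow_conv_le (hB0 n) (by omega) (le_trans hn.le (le_max_left _ _))
  obtain ⟨K, hK1, hKb⟩ := exists_geom_bound B hB0 hτpos hBev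
  -- β
  set α : ℝ := (1 - η) * ρ⁻¹ with hαdef
  have hαpos : 0 < α := mul_pos (by linarith) hρinv
  have hαlt : α < ρ⁻¹ := by
    have h := mul_pos hη hρinv
    have : α = (1 - η) * ρ⁻¹ := hαdef
    nlinarith
  have hqpos : 0 < q := by omega
  have hγβ : ρ⁻¹^(q-1) * τ < (ρ⁻¹)^q := by
    have : (ρ⁻¹)^q = ρ⁻¹^(q-1) * ρ⁻¹ := by
      rw [← pow_succ]
      have h0 : q - 1 + 1 = q := by omega
      rw [h0]
    rw [this]
    exact mul_lt_mul_of_pos_left hτlt (pow_pos hρinv _)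
  obtain ⟨β, ⟨hβ1, hβ2, hβ3⟩, hβlt⟩ : ∃ β : ℝ,
      (ρ⁻¹^(q-1) * τ < β^q ∧ max α τ < β ∧ 0 < β) ∧ β < ρ⁻¹ := by
    have hc : Tendsto (fun β : ℝ => β ^ q) (nhds ρ⁻¹) (nhds ((ρ⁻¹)^q)) :=
      (continuous_pow q).continuousAt
    have e1 : ∀ᶠ β in nhds ρ⁻¹, ρ⁻¹^(q-1) * τ < β^q := hc.eventually_const_lt hγβ
    have e2 : ∀ᶠ β in nhds ρ⁻¹, max α τ < β := eventually_gt_nhds (max_lt hαlt hτlt)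
    have e3 : ∀ᶠ β in nhds ρ⁻¹, (0:ℝ) < β := eventually_gt_nhds hρinv
    have := ((e1.and (e2.and e3)).filter_mono nhdsWithin_le_nhds).and
      (self_mem_nhdsWithin (s := Set.Iio ρ⁻¹))
    obtain ⟨β, ⟨hb1, hb2, hb3⟩, hb4⟩ := this.exists
    exact ⟨β, ⟨hb1, hb2, hb3⟩, hb4⟩
  -- μ
  obtain ⟨μ, ⟨hμ1, hμ2⟩, hμgt⟩ : ∃ μ : ℝ,
      (μ^(q-1) * τ < β^q ∧ 0 < μ) ∧ ρ⁻¹ < μ := by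
    have hc : Tendsto (fun μ : ℝ => μ ^ (q-1) * τ) (nhds ρ⁻¹) (nhds (ρ⁻¹^(q-1) * τ)) :=
      (((continuous_pow (q-1)).mul continuous_const)).continuousAt
    have e1 : ∀ᶠ μ in nhds ρ⁻¹, μ^(q-1) * τ < β^q := hc.eventually_lt_const hβ1
    have e3 : ∀ᶠ μ in nhds ρ⁻¹, (0:ℝ) < μ := eventually_gt_nhds hρinv
    have := ((e1.and e3).filter_mono nhdsWithin_le_nhds).and
      (self_mem_nhdsWithin (s := Set.Ioi ρ⁻¹))
    obtain ⟨μ, ⟨hb1, hb3⟩, hb4⟩ := this.exists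
    exact ⟨μ, ⟨hb1, hb3⟩, hb4⟩
  have hτμ : τ ≤ μ := le_of_lt (lt_trans hτlt hμgt)
  -- bound on A
  have hAev : ∀ᶠ n : ℕ in atTop, A n ≤ μ ^ n := by
    have h1 : ∀ᶠ n : ℕ in atTop, A n ^ ((1:ℝ)/(n:ℝ)) < μ := by
      have hlt : limsup (fun n : ℕ => ((A n ^ ((1:ℝ)/(n:ℝ)) : ℝ) : EReal)) atTop
          < ((μ:ℝ) : EReal) := by
        rw [hρa]
        exact_mod_cast hμgt
      have := Filter.eventually_lt_of_limsup_lt hlt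
      filter_upwards [this] with n hn
      exact_mod_cast hn
    filter_upwards [h1, eventually_ge_atTop 1] with n hn hn1
    exact rpow_conv_le (hA0 n) (by omega) hn.le
  obtain ⟨L, hL1, hLa⟩ := exists_geom_bound A hA0 hμ2 hAev
  -- η'
  have hβρ : β * ρ < 1 := by
    have := mul_lt_mul_of_pos_right hβlt hρpos
    rwa [inv_mul_cancel₀ hρpos.ne'] at this
  refine ⟨1 - β * ρ, by linarith, ?_⟩
  have hβeq : (1 - (1 - β * ρ)) * ρ⁻¹ = β := by
    have : (1 - (1 - β * ρ)) * ρ⁻¹ = β * (ρ * ρ⁻¹) := by ring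
    rw [this, mul_inv_cancel₀ hρpos.ne', mul_one]
  set m : ℝ := max α τ with hm
  have hm0 : 0 < m := lt_of_lt_of_le hαpos (le_max_left _ _)
  set γ : ℝ := μ^(q-1) * τ with hγ
  have hγ0 : 0 ≤ γ := le_of_lt (mul_pos (pow_pos hμ2 _) hτpos)
  have aux1 := aux_geom_s6 (2*K*L) (le_of_lt hm0) hβ2 1
  have aux2 := aux_geom_s6 ((2*K*L)^q) hγ0 hμ1 q
  filter_upwards [aux1, aux2, eventually_ge_atTop (2*q+2)] with n ha1 ha2 hn
    rich
  by_contra hno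
  push_neg at hno
  -- arithmetic facts
  set d : ℕ := n / q + 1 with hd
  clear_value d
  have hdivq : n / q ≤ n / 2 := Nat.div_le_div_left hq (by omega)
  have hdm := Nat.div_add_mod n q
  have hmod : n % q < q := Nat.mod_lt n hqpos
  have hdn : d ≤ n := by omega
  have hnd1 : 1 ≤ n - d := by omega
  have hqd : n ≤ q * d := by
    rw [hd, Nat.mul_succ]
    omega
  -- richness of c at n gives lower bound
  have hC0 : 0 ≤ ((∑ k ∈ range (n+1), n.choose k * a k * b (n-k) : ℕ) : ℝ)
      / (Nat.factorial n : ℝ) := div_nonneg (Nat.cast_nonneg _) (Nat.cast_nonneg _)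
  have hrich' : β ≤ (((∑ k ∈ range (n+1), n.choose k * a k * b (n-k) : ℕ) : ℝ)
      / (Nat.factorial n : ℝ)) ^ ((1:ℝ)/(n:ℝ)) := by
    have := rich
    simp only [IsRich] at this
    rw [hβeq] at this
    exact this
  have hlow : β ^ n ≤ ((∑ k ∈ range (n+1), n.choose k * a k * b (n-k) : ℕ) : ℝ)
      / (Nat.factorial n : ℝ) := by
    have := pow_le_pow_left₀ (le_of_lt hβ3) hrich' n
    rwa [rpow_inv_pow hC0 (by omega)] at this
  -- upper bound on each term
  set F : ℝ := μ^(n-d) * τ^d with hF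
  have hF0 : 0 < F := mul_pos (pow_pos hμ2 _) (pow_pos hτpos _)
  have hterm : ∀ k ∈ range (n+1),
      A k * B (n-k) ≤ K * L * F + K * L * m ^ n := by
    intro k hk
    have hkn : k ≤ n := Nat.lt_succ_iff.mp (mem_range.mp hk)
    rcases lt_or_ge k (n-d) with hcase | hcase
    · have h1 : A k * B (n-k) ≤ (L * μ^k) * (K * τ^(n-k)) :=
        mul_le_mul (hLa k) (hKb (n-k)) (hB0 _) (by positivity)
      have h2 : μ^k * τ^(n-k) ≤ F := by
        calc μ^k * τ^(n-k) = μ^k * (τ^d * τ^(n-d-k)) := by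
              have h0 : d + (n - d - k) = n - k := by omega
              rw [← pow_add, h0]
          _ ≤ μ^k * (τ^d * μ^(n-d-k)) := by
              have := pow_le_pow_left₀ (le_of_lt hτpos) hτμ (n-d-k)
              have hh : τ^d * τ^(n-d-k) ≤ τ^d * μ^(n-d-k) :=
                mul_le_mul_of_nonneg_left this (by positivity)
              exact mul_le_mul_of_nonneg_left hh (by positivity)
          _ = F := by
              have h5 : μ^k * μ^(n-d-k) = μ^(n-d) := by
                have h0 : k + (n - d - k) = n - d := by omega
                rw [← pow_add, h0]
              calc μ^k * (τ^d * μ^(n-d-k)) = (μ^k * μ^(n-d-k)) * τ^d := by ring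
                _ = μ^(n-d) * τ^d := by rw [h5]
                _ = F := hF.symm
      have h3 : (L * μ^k) * (K * τ^(n-k)) = K * L * (μ^k * τ^(n-k)) := by ring
      have h4 : A k * B (n-k) ≤ K * L * F := by
        rw [h3] at h1
        calc A k * B (n-k) ≤ K * L * (μ^k * τ^(n-k)) := h1
          _ ≤ K * L * F := mul_le_mul_of_nonneg_left h2 (by positivity)
      have : (0:ℝ) ≤ K * L * m ^ n := by positivity
      linarith
    · have hne : k ≠ 0 := by omega
      have hnr := hno k hcase hkn
      simp only [IsRich] at hnr
      push_neg at hnr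
      have hak : A k ≤ α ^ k := rpow_conv_le (hA0 k) hne (le_of_lt hnr)
      have h1 : A k * B (n-k) ≤ α^k * (K * τ^(n-k)) :=
        mul_le_mul hak (hKb (n-k)) (hB0 _) (by positivity)
      have h2 : α^k * τ^(n-k) ≤ m^n := by
        calc α^k * τ^(n-k) ≤ m^k * m^(n-k) := by
              have e1 := pow_le_pow_left₀ (le_of_lt hαpos) (le_max_left α τ) k
              have e2 := pow_le_pow_left₀ (le_of_lt hτpos) (le_max_right α τ) (n-k)
              exact mul_le_mul e1 e2 (by positivity) (by positivity)
          _ = m^n := by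
              have h0 : k + (n - k) = n := by omega
              rw [← pow_add, h0]
      have h3 : A k * B (n-k) ≤ K * L * m^n := by
        calc A k * B (n-k) ≤ α^k * (K * τ^(n-k)) := h1
          _ = K * (α^k * τ^(n-k)) := by ring
          _ ≤ K * m^n := mul_le_mul_of_nonneg_left h2 (by positivity)
          _ ≤ K * L * m^n :=
              mul_le_mul_of_nonneg_right
                (le_mul_of_one_le_right (by positivity) hL1) (pow_nonneg hm0.le n)
      have : (0:ℝ) ≤ K * L * F := by positivity
      linarith
  -- sum bound
  have hsum : ((∑ k ∈ range (n+1), n.choose k * a k * b (n-k) : ℕ) : ℝ)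
      / (Nat.factorial n : ℝ) ≤ ((n:ℝ)+1) * (K * L * F + K * L * m ^ n) := by
    rw [conv_sum]
    have := Finset.sum_le_card_nsmul (range (n+1))
      (fun k => A k * B (n-k)) (K * L * F + K * L * m ^ n) hterm
    rw [Finset.card_range] at this
    calc ∑ k ∈ range (n+1), A k * B (n-k)
        ≤ (n+1) • (K * L * F + K * L * m ^ n) := this
      _ = ((n:ℝ)+1) * (K * L * F + K * L * m ^ n) := by
          rw [nsmul_eq_mul]
          push_cast
          ring
  -- smallness from aux1, aux2
  have hs1 : ((n:ℝ)+1) * (K * L * m ^ n) < β^n / 2 := by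
    have : 2*K*L * ((n:ℝ)+1)^1 * m^n < β^n := ha1
    nlinarith
  have hs2 : ((n:ℝ)+1) * (K * L * F) < β^n / 2 := by
    obtain ⟨e, he⟩ : ∃ e, q * d = n + e := ⟨q * d - n, by omega⟩
    obtain ⟨t, ht⟩ := Nat.exists_eq_add_of_le hdn
    have hndt : n - d = t := by omega
    have hexp : (n - d) * q + e = (q - 1) * n := by
      have hqn : (q:ℤ) * n = q * d + q * t := by
        have : (n:ℤ) = d + t := by exact_mod_cast ht
        rw [this]; ring
      have he' : (q:ℤ) * d = n + e := by exact_mod_cast he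
      have h1 : (t:ℤ) * q + e = (q - 1) * n := by
        linear_combination (-1 : ℤ) * hqn - he'
      rw [hndt]
      have hq1 : 1 ≤ q := by omega
      zify [hq1]
      exact h1
    have hτe : τ^e ≤ μ^e := pow_le_pow_left₀ hτpos.le hτμ e
    have hFq : F^q ≤ γ^n := by
      have e1 : F ^ q = μ ^ ((n-d)*q) * τ ^ (d*q) := by
        rw [hF, mul_pow, ← pow_mul, ← pow_mul]
      have e2 : γ ^ n = μ ^ ((q-1)*n) * τ ^ n := by
        rw [hγ, mul_pow, ← pow_mul]
      have e4 : d*q = n + e := by rw [mul_comm]; exact he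
      calc F^q = μ^((n-d)*q) * τ^(d*q) := e1
        _ = μ^((n-d)*q) * (τ^n * τ^e) := by rw [e4, pow_add]
        _ ≤ μ^((n-d)*q) * (τ^n * μ^e) := by
            exact mul_le_mul_of_nonneg_left
              (mul_le_mul_of_nonneg_left hτe (pow_nonneg hτpos.le n))
              (pow_nonneg hμ2.le _)
        _ = μ^((q-1)*n) * τ^n := by rw [← hexp, pow_add]; ring
        _ = γ^n := e2.symm
    have h6 : (2*K*L*((n:ℝ)+1) * F)^q ≤ (2*K*L)^q * ((n:ℝ)+1)^q * γ^n := by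
      rw [mul_pow, mul_pow]
      exact mul_le_mul_of_nonneg_left hFq (by positivity)
    have h7 : (2*K*L*((n:ℝ)+1) * F)^q < (β^n)^q := by
      calc (2*K*L*((n:ℝ)+1) * F)^q ≤ (2*K*L)^q * ((n:ℝ)+1)^q * γ^n := h6
        _ < (β^q)^n := ha2
        _ = (β^n)^q := by rw [← pow_mul, ← pow_mul, mul_comm]
    have h8 : 2*K*L*((n:ℝ)+1) * F < β^n :=
      lt_of_pow_lt_pow_left₀ q (pow_nonneg hβ3.le n) h7
    have h9 : ((n:ℝ)+1) * (K * L * F) = (2*K*L*((n:ℝ)+1) * F)/2 := by ring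
    linarith
  linarith [hsum, hlow, hs1, hs2]


end Stmt6Aux

set_option maxHeartbeats 1000000 in
/-- Let `a`, `b` count graph classes `G`, `H` with `0 < ρ_G < ρ_H`
(radius of convergence in Cauchy–Hadamard form, `ρ_G < ρ_H` expressed as
`limsup (b n/n!)^(1/n) < ρ_G⁻¹`), with `b 0 > 0` (the class `H` contains the null
graph).  If the labelled product `G ⊗ H`, with counts
`c n = ∑ k (n choose k) a k b (n-k)` and radius `ρ_G`, has a weak growth constant,
then `G` has a weak growth constant. -/
theorem stmt_6 (a b : ℕ → ℕ) (ρ : ℝ) (hρpos : 0 < ρ) (hb0 : 0 < b 0)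
    (hρa : limsup (fun n : ℕ =>
        ((((a n : ℝ) / (Nat.factorial n : ℝ)) ^ ((1 : ℝ) / (n : ℝ)) : ℝ) : EReal)) atTop
        = ((ρ⁻¹ : ℝ) : EReal))
    (hρb : limsup (fun n : ℕ =>
        ((((b n : ℝ) / (Nat.factorial n : ℝ)) ^ ((1 : ℝ) / (n : ℝ)) : ℝ) : EReal)) atTop
        < ((ρ⁻¹ : ℝ) : EReal))
    (hwgc : HasWeakGrowthConstant
        (fun n => ∑ k ∈ Finset.range (n + 1), n.choose k * a k * b (n - k)) ρ) :
    HasWeakGrowthConstant a ρ := by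
  intro η hη
  rcases lt_or_ge η 1 with hη1 | hη1
  · constructor
    · -- infinite
      obtain ⟨η', hη'pos, hev⟩ := key a b ρ hρpos hρa hρb (le_refl 2) hη hη1
      obtain ⟨hinfc, -⟩ := hwgc η' hη'pos
      obtain ⟨N, hN⟩ := eventually_atTop.mp hev
      intro hfin
      obtain ⟨M, hM⟩ := hfin.bddAbove
      obtain ⟨n, hnS, hngt⟩ := hinfc.exists_gt (max N (2*M+4))
      obtain ⟨k, hk1, hk2, hk3⟩ := hN n (le_trans (le_max_left _ _) hngt.le) hnS
      have hkM : k ≤ M := hM hk3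
      have hn2 : 2*M+4 < n := lt_of_le_of_lt (le_max_right _ _) hngt
      omega
    · -- tendsto
      rw [NormedAddCommGroup.tendsto_nhds_zero]
      intro ε hε
      set ε0 : ℝ := min ε 1 with hε0def
      have hε0pos : 0 < ε0 := lt_min hε (by norm_num)
      have hε01 : ε0 ≤ 1 := min_le_right _ _
      have hε0ε : ε0 ≤ ε := min_le_left _ _
      set q : ℕ := ⌈(9:ℝ)/ε0⌉₊ + 2 with hqdef
      have hq : 2 ≤ q := by omega
      have hQ2 : (2:ℝ) ≤ (q:ℝ) := by exact_mod_cast hq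
      have hQceil : (9:ℝ)/ε0 ≤ (⌈(9:ℝ)/ε0⌉₊ : ℝ) := Nat.le_ceil _
      have hQbig : (9:ℝ)/ε0 + 2 ≤ (q:ℝ) := by
        rw [hqdef]
        push_cast
        linarith
      have hQ1 : (0:ℝ) < (q:ℝ) - 1 := by linarith
      have hq1r : (1:ℝ)/((q:ℝ)-1) < ε0/8 := by
        rw [div_lt_div_iff₀ hQ1 (by norm_num : (0:ℝ) < 8)]
        have h8 : (8:ℝ)/ε0 < (q:ℝ) - 1 := by
          have : (0:ℝ) < 1/ε0 := by positivity
          have h9 : (9:ℝ)/ε0 = 8/ε0 + 1/ε0 := by ring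
          linarith
        have := mul_lt_mul_of_pos_left h8 hε0pos
        rw [mul_div_cancel₀ _ hε0pos.ne'] at this
        linarith
      obtain ⟨η', hη'pos, hev⟩ := key a b ρ hρpos hρa hρb hq hη hη1
      obtain ⟨hinfc, htc⟩ := hwgc η' hη'pos
      obtain ⟨N1, hN1⟩ := eventually_atTop.mp hev
      have hgapc : ∀ᶠ j : ℕ in atTop,
          (gapOf {n | IsRich (fun n => ∑ k ∈ Finset.range (n + 1),
            n.choose k * a k * b (n - k)) ρ η' n} j : ℝ) < ε0/8 * j := by
        have h := (NormedAddCommGroup.tendsto_nhds_zero.mp htc) (ε0/8) (by positivity)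
        filter_upwards [h, eventually_ge_atTop 1] with j hj hj1
        have hjpos : (0:ℝ) < (j:ℝ) := by exact_mod_cast hj1
        rw [Real.norm_eq_abs, abs_of_nonneg (by positivity)] at hj
        calc (gapOf _ j : ℝ) = (gapOf _ j : ℝ) / j * j := by field_simp
          _ < ε0/8 * j := mul_lt_mul_of_pos_right hj hjpos
      obtain ⟨N2, hN2⟩ := eventually_atTop.mp hgapc
      filter_upwards [eventually_ge_atTop (max (max N1 N2) (max 1 (⌈(7:ℝ)/ε0⌉₊)))]
        with n hn
      have hnN1 : N1 ≤ n := le_trans (le_trans (le_max_left _ _) (le_max_left _ _)) hn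
      have hnN2 : N2 ≤ n := le_trans (le_trans (le_max_right _ _) (le_max_left _ _)) hn
      have hn1 : 1 ≤ n := le_trans (le_trans (le_max_left _ _) (le_max_right _ _)) hn
      have hn7 : (7:ℝ)/ε0 ≤ (n:ℝ) := by
        have h1 : (⌈(7:ℝ)/ε0⌉₊ : ℕ) ≤ n :=
          le_trans (le_trans (le_max_right _ _) (le_max_right _ _)) hn
        calc (7:ℝ)/ε0 ≤ (⌈(7:ℝ)/ε0⌉₊ : ℝ) := Nat.le_ceil _
          _ ≤ (n:ℝ) := by exact_mod_cast h1
      have hnpos : (0:ℝ) < (n:ℝ) := by exact_mod_cast hn1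
      -- construct n'
      set c1 : ℕ := q * (n+1) with hc1
      set w : ℕ := c1 / (q-1) with hw
      set n' : ℕ := w + 1 with hn'
      clear_value n' w c1
      have hdm : (q-1) * w + c1 % (q-1) = c1 := by
        rw [hw]; exact Nat.div_add_mod c1 (q-1)
      have hwm : c1 % (q-1) < q-1 := Nat.mod_lt _ (by omega)
      have hn'q : q*(n+1) ≤ (q-1)*n' := by
        have h1 : (q-1)*n' = (q-1)*w + (q-1) := by rw [hn', Nat.mul_succ]
        omega
      have hnn' : n + 1 ≤ n' := by
        have h1 : (q-1)*(n+1) ≤ c1 := by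
          rw [hc1]
          exact Nat.mul_le_mul_right _ (by omega)
        have h2 : (q-1)*(n+1)/(q-1) ≤ c1/(q-1) := Nat.div_le_div_right h1
        have h3 : (q-1)*(n+1)/(q-1) = n+1 := Nat.mul_div_cancel_left _ (by omega)
        rw [← hw] at h2
        omega
      obtain ⟨hmS, hmge⟩ := gapOf_mem hinfc n'
      set m : ℕ := n' + gapOf {n | IsRich (fun n => ∑ k ∈ Finset.range (n + 1),
        n.choose k * a k * b (n - k)) ρ η' n} n' with hmdef
      clear_value m
      have hmN1 : N1 ≤ m := le_trans hnN1 (le_trans (by omega) hmge)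
      obtain ⟨k, hk1, hk2, hk3⟩ := hN1 m hmN1 hmS
      -- n + 1 + m/q ≤ m
      have hqm : n + 1 + m/q ≤ m := by
        have h1 : m/q * q ≤ m := Nat.div_mul_le_self m q
        have h2 : (q-1)*n' ≤ (q-1)*m := Nat.mul_le_mul_left _ hmge
        have h3 : (q-1)*m = q*m - m := by rw [Nat.sub_one_mul]
        have h4 : m ≤ q*m := Nat.le_mul_of_pos_left m (by omega)
        have h5 : q*(n+1) + m ≤ q*m := by omega
        have h6 : q*(n+1+m/q) = q*(n+1) + q*(m/q) := by rw [Nat.mul_add]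
        have h7 : q*(m/q) ≤ m := by
          calc q*(m/q) = m/q*q := Nat.mul_comm _ _
            _ ≤ m := h1
        have h8 : q*(n+1+m/q) ≤ q*m := by omega
        exact Nat.le_of_mul_le_mul_left h8 (by omega)
      have hnk : n ≤ k := by omega
      have hnm : n ≤ m := by omega
      -- gap bound
      have hgap : gapOf {n | IsRich a ρ η n} n ≤ m - n :=
        le_trans (gapOf_le hk3 hnk) (by omega)
      have hgapR : (gapOf {n | IsRich a ρ η n} n : ℝ) ≤ (m:ℝ) - (n:ℝ) := by
        have := (Nat.cast_le (α := ℝ)).mpr hgap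
        rwa [Nat.cast_sub hnm] at this
      -- real bounds
      have hg : (gapOf {n | IsRich (fun n => ∑ k ∈ Finset.range (n + 1),
          n.choose k * a k * b (n - k)) ρ η' n} n' : ℝ) < ε0/8 * n' :=
        hN2 n' (by omega)
      have hmR : (m:ℝ) = (n':ℝ) + (gapOf {n | IsRich (fun n => ∑ k ∈ Finset.range (n + 1),
          n.choose k * a k * b (n - k)) ρ η' n} n' : ℝ) := by
        rw [hmdef]; push_cast; ring
      have hn'R : (n':ℝ) ≤ (q:ℝ)*((n:ℝ)+1)/((q:ℝ)-1) + 1 := by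
        have h1 : ((w:ℕ):ℝ) ≤ (c1:ℝ)/((q-1:ℕ):ℝ) := by
          rw [hw]
          exact Nat.cast_div_le
        have h2 : ((q-1:ℕ):ℝ) = (q:ℝ) - 1 := by
          have : (1:ℕ) ≤ q := by omega
          push_cast [this]
          ring
        have h3 : (c1:ℝ) = (q:ℝ)*((n:ℝ)+1) := by rw [hc1]; push_cast; ring
        rw [h2, h3] at h1
        have h4 : (n':ℝ) = (w:ℝ) + 1 := by rw [hn']; push_cast; ring
        linarith
      have hsplit : (q:ℝ)*((n:ℝ)+1)/((q:ℝ)-1) = ((n:ℝ)+1) + ((n:ℝ)+1)*(1/((q:ℝ)-1)) := by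
        field_simp
        ring
      have hP1 : (n':ℝ) ≤ (n:ℝ) + 2 + ((n:ℝ)+1)*(ε0/8) := by
        have h1 : ((n:ℝ)+1)*(1/((q:ℝ)-1)) ≤ ((n:ℝ)+1)*(ε0/8) :=
          mul_le_mul_of_nonneg_left hq1r.le (by positivity)
        rw [hsplit] at hn'R
        linarith
      have hP3 : (7:ℝ) ≤ ε0 * (n:ℝ) := by
        have := mul_le_mul_of_nonneg_left hn7 hε0pos.le
        rwa [mul_div_cancel₀ _ hε0pos.ne'] at this
      -- final
      rw [Real.norm_eq_abs, abs_of_nonneg (by positivity), div_lt_iff₀ hnpos]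
      have hfinal : (m:ℝ) - (n:ℝ) < ε0 * n := by
        have h1 : (m:ℝ) - n < ((n':ℝ) - n) + ε0/8 * n' := by
          rw [hmR]; linarith
        nlinarith [mul_le_mul_of_nonneg_left hP1 (by positivity : (0:ℝ) ≤ ε0/8),
          mul_pos hε0pos hnpos, sq_nonneg ε0, sq_nonneg ((n:ℝ)*ε0)]
      calc (gapOf {n | IsRich a ρ η n} n : ℝ) ≤ (m:ℝ) - n := hgapR
        _ < ε0 * n := hfinal
        _ ≤ ε * n := mul_le_mul_of_nonneg_right hε0ε hnpos.le
  · -- η ≥ 1 : every n is rich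
    have hall : ∀ n, IsRich a ρ η n := fun n => by
      unfold IsRich
      have h1 : (1 - η) * ρ⁻¹ ≤ 0 :=
        mul_nonpos_of_nonpos_of_nonneg (by linarith) (inv_pos.mpr hρpos).le
      exact le_trans h1 (Real.rpow_nonneg
        (div_nonneg (Nat.cast_nonneg _) (Nat.cast_nonneg _)) _)
    have hset : {n | IsRich a ρ η n} = Set.univ := Set.eq_univ_of_forall hall
    rw [hset]
    constructor
    · exact Set.infinite_univ
    · have hzero : ∀ n, gapOf Set.univ n = 0 := fun n => by
        have h1 : sInf {m | m ∈ (Set.univ : Set ℕ) ∧ n ≤ m} ≤ n :=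
          Nat.sInf_le ⟨trivial, le_refl n⟩
        unfold gapOf
        omega
      have : (fun n : ℕ => ((gapOf Set.univ n : ℕ) : ℝ) / (n : ℝ)) = fun n => 0 := by
        funext n
        rw [hzero n]
        simp
      rw [this]
      exact tendsto_const_nhds
end

section
/- Let G be a class of graphs closed under adding a leaf (adding a new vertex joined by one edge to an existing vertex). If G has a weak growth constant, then G has a growth constant (equal to ρ_G^{-1}). -/
open Filter

/-- Add a new vertex to `G` joined by a single edge to `u` (a pendant leaf). -/
def addLeaf {V : Type} (G : SimpleGraph V) (u : V) : SimpleGraph (V ⊕ Unit) :=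
  SimpleGraph.fromRel (fun x y =>
    (∃ a b, x = Sum.inl a ∧ y = Sum.inl b ∧ G.Adj a b) ∨
    (x = Sum.inl u ∧ y = Sum.inr ()))

lemma addLeaf_adj_inl_inl {V : Type} (G : SimpleGraph V) (u : V) (x y : V) :
    (addLeaf G u).Adj (Sum.inl x) (Sum.inl y) ↔ G.Adj x y := by
  simp only [addLeaf, SimpleGraph.fromRel_adj]
  constructor
  · rintro ⟨hne, (⟨a, b, ha, hb, hab⟩ | ⟨h1, h2⟩) | (⟨a, b, ha, hb, hab⟩ | ⟨h1, h2⟩)⟩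
    · cases ha; cases hb; exact hab
    · exact absurd h2 (by simp)
    · cases ha; cases hb; exact hab.symm
    · exact absurd h2 (by simp)
  · intro h
    exact ⟨by simpa using h.ne, Or.inl (Or.inl ⟨x, y, rfl, rfl, h⟩)⟩

lemma addLeaf_adj_inl_inr {V : Type} (G : SimpleGraph V) (u : V) (x : V) :
    (addLeaf G u).Adj (Sum.inl x) (Sum.inr ()) ↔ x = u := by
  simp only [addLeaf, SimpleGraph.fromRel_adj]
  constructor
  · rintro ⟨hne, (⟨a, b, ha, hb, hab⟩ | ⟨h1, h2⟩) | (⟨a, b, ha, hb, hab⟩ | ⟨h1, h2⟩)⟩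
    · exact absurd hb (by simp)
    · exact Sum.inl.inj h1
    · exact absurd ha (by simp)
    · exact absurd h1 (by simp)
  · rintro rfl
    refine ⟨by simp, Or.inl (Or.inr ⟨rfl, ?_⟩)⟩
    trivial

def sumUnitEquiv (n : ℕ) : Fin n ⊕ Unit ≃ Fin (n + 1) :=
  (Equiv.sumCongr (Equiv.refl (Fin n)) (Equiv.ofUnique Unit (Fin 1))).trans finSumFinEquiv

lemma leaf_step (𝒢 : ∀ ⦃V : Type⦄ [Fintype V], SimpleGraph V → Prop)
    (hiso : ∀ (V W : Type) [Fintype V] [Fintype W] (G : SimpleGraph V)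
      (H : SimpleGraph W), Nonempty (G ≃g H) → 𝒢 G → 𝒢 H)
    (hleaf : ∀ (V : Type) [Fintype V] (G : SimpleGraph V) (u : V),
      𝒢 G → 𝒢 (addLeaf G u))
    (a : ℕ → ℕ) (ha : ∀ n, a n = Set.ncard {G : SimpleGraph (Fin n) | 𝒢 G})
    (n : ℕ) : n * a n ≤ a (n + 1) := by
  classical
  set e := sumUnitEquiv n with he
  set S : Set (SimpleGraph (Fin n)) := {G | 𝒢 G} with hSdef
  set T : Set (SimpleGraph (Fin (n + 1))) := {G | 𝒢 G} with hTdef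
  have hmem : ∀ (G : SimpleGraph (Fin n)), G ∈ S → ∀ u : Fin n,
      ((addLeaf G u).comap ⇑e.symm) ∈ T := by
    intro G hG u
    have h1 : 𝒢 (addLeaf G u) := hleaf (Fin n) G u hG
    exact hiso _ _ _ _ ⟨(SimpleGraph.Iso.comap e.symm (addLeaf G u)).symm⟩ h1
  let f : ↥S × Fin n → ↥T := fun p =>
    ⟨(addLeaf p.1.1 p.2).comap ⇑e.symm, hmem p.1.1 p.1.2 p.2⟩
  have hf : Function.Injective f := by
    rintro ⟨⟨G, hG⟩, u⟩ ⟨⟨G', hG'⟩, u'⟩ h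
    have h0 : (addLeaf G u).comap ⇑e.symm = (addLeaf G' u').comap ⇑e.symm :=
      congrArg Subtype.val h
    have h2 : addLeaf G u = addLeaf G' u' := by
      ext x y
      have := congrArg (fun H : SimpleGraph (Fin (n + 1)) => H.Adj (e x) (e y)) h0
      simpa [SimpleGraph.comap] using this
    have huu : u = u' := by
      have h3 : (addLeaf G' u').Adj (Sum.inl u) (Sum.inr ()) := by
        rw [← h2]; exact (addLeaf_adj_inl_inr G u u).2 rfl
      exact (addLeaf_adj_inl_inr G' u' u).1 h3
    have hGG : G = G' := by
      ext x y
      rw [← addLeaf_adj_inl_inl G u x y, ← addLeaf_adj_inl_inl G' u' x y, h2]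
    simp [hGG, huu]
  have hcard : Nat.card (↥S × Fin n) ≤ Nat.card ↥T :=
    Nat.card_le_card_of_injective f hf
  have h1 : Nat.card (↥S × Fin n) = a n * n := by
    rw [Nat.card_prod, Nat.card_coe_set_eq, ← ha n]
    simp [Nat.card_eq_fintype_card]
  have h2 : Nat.card ↥T = a (n + 1) := by
    rw [Nat.card_coe_set_eq, ← ha (n + 1)]
  rw [h1, h2] at hcard
  rwa [Nat.mul_comm]

lemma prod_step (a : ℕ → ℕ) (hstep : ∀ n, n * a n ≤ a (n + 1)) :
    ∀ m N, m ≤ N → (∏ k ∈ Finset.Ico m N, k) * a m ≤ a N := by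
  intro m N hmN
  induction N, hmN using Nat.le_induction with
  | base => simp
  | succ N hmN ih =>
    rw [Finset.prod_Ico_succ_top hmN]
    calc (∏ k ∈ Finset.Ico m N, k) * N * a m
        = N * ((∏ k ∈ Finset.Ico m N, k) * a m) := by ring
      _ ≤ N * a N := Nat.mul_le_mul_left N ih
      _ ≤ a (N + 1) := hstep N

lemma fact_identity : ∀ m N : ℕ, m ≤ N →
    m.factorial * (∏ k ∈ Finset.Ico m N, k) * N = m * N.factorial := by
  intro m N hmN
  induction N, hmN using Nat.le_induction with
  | base => simp [Nat.mul_comm]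
  | succ N hmN ih =>
    rw [Finset.prod_Ico_succ_top hmN, Nat.factorial_succ]
    calc m.factorial * ((∏ k ∈ Finset.Ico m N, k) * N) * (N + 1)
        = (m.factorial * (∏ k ∈ Finset.Ico m N, k) * N) * (N + 1) := by ring
      _ = m * N.factorial * (N + 1) := by rw [ih]
      _ = m * ((N + 1) * N.factorial) := by ring

lemma real_step (a : ℕ → ℕ) (hstep : ∀ n, n * a n ≤ a (n + 1)) (m N : ℕ)
    (hm : 1 ≤ m) (hmN : m ≤ N) :
    ((a m : ℝ) / (m.factorial : ℝ)) * ((m : ℝ) / (N : ℝ)) ≤ (a N : ℝ) / (N.factorial : ℝ) := by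
  have hN : (1 : ℕ) ≤ N := hm.trans hmN
  have hNpos : (0 : ℝ) < (N : ℝ) := by exact_mod_cast hN
  have hmf : (0 : ℝ) < (m.factorial : ℝ) := by exact_mod_cast m.factorial_pos
  have hNf : (0 : ℝ) < (N.factorial : ℝ) := by exact_mod_cast N.factorial_pos
  have hP := prod_step a hstep m N hmN
  have hI := fact_identity m N hmN
  set P : ℕ := ∏ k ∈ Finset.Ico m N, k with hPdef
  have hPr : (P : ℝ) * (a m : ℝ) ≤ (a N : ℝ) := by exact_mod_cast hP
  have hIr : (m.factorial : ℝ) * (P : ℝ) * (N : ℝ) = (m : ℝ) * (N.factorial : ℝ) := by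
    exact_mod_cast hI
  rw [div_mul_div_comm, div_le_div_iff₀ (by positivity) hNf]
  calc (a m : ℝ) * (m : ℝ) * (N.factorial : ℝ)
      = ((P : ℝ) * (a m : ℝ)) * ((m.factorial : ℝ) * (N : ℝ)) := by
        nlinarith [hIr]
    _ ≤ (a N : ℝ) * ((m.factorial : ℝ) * (N : ℝ)) := by
        apply mul_le_mul_of_nonneg_right hPr (by positivity)

lemma lower_bound (a : ℕ → ℕ) (ρ : ℝ) (hρpos : 0 < ρ)
    (hstep : ∀ n, n * a n ≤ a (n + 1))
    (hwgc : HasWeakGrowthConstant a ρ) (c : ℝ) (hc : c < ρ⁻¹) :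
    ∀ᶠ N in atTop, c < ((a N : ℝ) / (Nat.factorial N : ℝ)) ^ ((1 : ℝ) / (N : ℝ)) := by
  set b : ℕ → ℝ := fun n => ((a n : ℝ) / (Nat.factorial n : ℝ)) ^ ((1 : ℝ) / (n : ℝ)) with hbdef
  have hbnn : ∀ n, 0 ≤ b n := fun n => Real.rpow_nonneg (by positivity) _
  by_cases hc0 : c < 0
  · filter_upwards with N
    exact hc0.trans_le (hbnn N)
  push_neg at hc0
  obtain ⟨c', hcc', hc'L⟩ := exists_between hc
  have hc'pos : 0 < c' := lt_of_le_of_lt hc0 hcc'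
  set η : ℝ := 1 - c' * ρ with hηdef
  have hηpos : 0 < η := by
    have : c' * ρ < ρ⁻¹ * ρ := by
      exact mul_lt_mul_of_pos_right hc'L hρpos
    rw [inv_mul_cancel₀ hρpos.ne'] at this
    simp only [hηdef]; linarith
  obtain ⟨hSinf, hStend⟩ := hwgc η hηpos
  set S : Set ℕ := {n | IsRich a ρ η n} with hSdef
  have hrich : ∀ m ∈ S, c' ≤ b m := by
    intro m hm
    have h1 : (1 - η) * ρ⁻¹ ≤ b m := hm
    have h2 : (1 - η) * ρ⁻¹ = c' := by
      simp only [hηdef]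
      field_simp
      ring
    linarith [h1, h2.symm.le]
  -- choose δ
  set f : ℝ → ℝ := fun δ => min (c' ^ (1 - 2*δ)) c' * (1 - 2*δ) with hfdef
  have hcont : ContinuousAt f 0 := by
    have h1 : ContinuousAt (fun δ : ℝ => c' ^ (1 - 2*δ)) 0 :=
      ContinuousAt.rpow continuousAt_const
        ((continuous_const.sub (continuous_const.mul continuous_id)).continuousAt) (Or.inl hc'pos.ne')
    exact (h1.min continuousAt_const).mul ((continuous_const.sub (continuous_const.mul continuous_id)).continuousAt)
  have hf0 : f 0 = c' := by
    simp [hfdef, Real.rpow_one]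
  have hev : ∀ᶠ δ in nhds (0 : ℝ), c < f δ := by
    apply hcont.eventually
    rw [hf0]
    exact eventually_gt_nhds hcc'
  obtain ⟨δ₀, hδ₀pos, hδ₀⟩ := Metric.eventually_nhds_iff_ball.1 hev
  set δ : ℝ := min (δ₀ / 2) (1 / 8) with hδdef
  have hδpos : 0 < δ := by positivity
  have hδle : δ ≤ 1 / 8 := min_le_right _ _
  have hδfc : c < f δ := by
    apply hδ₀
    rw [Metric.mem_ball, Real.dist_eq, sub_zero, abs_of_pos hδpos]
    calc δ ≤ δ₀ / 2 := min_le_left _ _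
      _ < δ₀ := by linarith
  have hg : ∀ᶠ n in atTop, ((gapOf S n : ℕ) : ℝ) / (n : ℝ) < δ := by
    have := Metric.tendsto_nhds.mp hStend δ hδpos
    simpa [Real.dist_eq] using this
  obtain ⟨n₀, hn₀⟩ := eventually_atTop.1 hg
  filter_upwards [eventually_ge_atTop (2 * n₀ + 16), eventually_ge_atTop (⌈1/δ⌉₊ + 1)]
    with N hN1 hN2
  have hNpos : 0 < N := by omega
  have hNr : (0 : ℝ) < (N : ℝ) := by exact_mod_cast hNpos
  have hδN1 : 1 ≤ δ * N := by
    have h1 : (1:ℝ)/δ ≤ N := by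
      have : (⌈1/δ⌉₊ : ℝ) ≤ N := by exact_mod_cast Nat.le_of_succ_le hN2
      exact le_trans (Nat.le_ceil _) this
    rw [div_le_iff₀ hδpos] at h1
    linarith [h1]
  set k : ℕ := ⌈δ * N⌉₊ with hkdef
  have hk1 : δ * N ≤ (k : ℝ) := Nat.le_ceil _
  have hk2 : (k : ℝ) ≤ 2 * δ * N := by
    have := Nat.ceil_lt_add_one (show (0:ℝ) ≤ δ * N by positivity)
    simp only [← hkdef] at this
    linarith
  have hk4 : (k : ℝ) ≤ (N : ℝ) / 4 := by
    calc (k : ℝ) ≤ 2 * δ * N := hk2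
      _ ≤ 2 * (1/8) * N := by nlinarith [hNr.le, hδle]
      _ = N / 4 := by ring
  have hkN : k ≤ N := by
    have : (k : ℝ) ≤ (N : ℝ) := le_trans hk4 (by linarith)
    exact_mod_cast this
  set n : ℕ := N - k with hndef
  have hncast : (n : ℝ) = (N : ℝ) - (k : ℝ) := by
    simp only [hndef]
    push_cast [Nat.cast_sub hkN]
    ring
  have hn34 : 3 * (N : ℝ) / 4 ≤ (n : ℝ) := by rw [hncast]; linarith
  have hnn₀ : n₀ ≤ n := by
    have h1 : (n₀ : ℝ) ≤ 3 * (N : ℝ) / 4 := by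
      have : (2 * n₀ + 16 : ℕ) ≤ (N : ℕ) := hN1
      have h2 : (2 * (n₀:ℝ) + 16) ≤ (N : ℝ) := by exact_mod_cast this
      linarith
    exact_mod_cast h1.trans hn34
  have hnpos : 0 < n := by
    have : (0:ℝ) < (n:ℝ) := lt_of_lt_of_le (by linarith) hn34
    exact_mod_cast this
  -- the rich element m
  have hSne : {x | x ∈ S ∧ n ≤ x}.Nonempty := by
    obtain ⟨x, hx1, hx2⟩ := hSinf.exists_gt n
    exact ⟨x, hx1, hx2.le⟩
  set m : ℕ := sInf {x | x ∈ S ∧ n ≤ x} with hmdef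
  have hm := Nat.sInf_mem hSne
  have hmS : m ∈ S := hm.1
  have hnm : n ≤ m := hm.2
  have hgap : gapOf S n = m - n := rfl
  have hgapδ : ((m - n : ℕ) : ℝ) < δ * n := by
    have h1 := hn₀ n hnn₀
    rw [hgap] at h1
    have h2 : ((m - n : ℕ) : ℝ) / (n : ℝ) < δ := h1
    have hnr : (0:ℝ) < (n:ℝ) := by exact_mod_cast hnpos
    rw [div_lt_iff₀ hnr] at h2
    linarith
  have hmcast : (m : ℝ) - (n : ℝ) = ((m - n : ℕ) : ℝ) := by
    push_cast [Nat.cast_sub hnm]; ring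
  have hmupper : (m : ℝ) ≤ (N : ℝ) := by
    have hthis : (m : ℝ) < (n : ℝ) + δ * n := by
      rw [← hmcast] at hgapδ; linarith
    have h3 : δ * (n:ℝ) ≤ δ * N := by
      apply mul_le_mul_of_nonneg_left _ hδpos.le
      rw [hncast]
      have : (0:ℝ) ≤ (k:ℝ) := by positivity
      linarith
    calc (m:ℝ) ≤ n + δ * n := hthis.le
      _ ≤ ((N:ℝ) - k) + δ * N := by linarith [h3, hncast]
      _ ≤ ((N:ℝ) - k) + k := by linarith [hk1]
      _ = N := by ring
  have hmN : m ≤ N := by exact_mod_cast hmupper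
  have hm1 : 1 ≤ m := le_trans hnpos hnm
  have hmr : (0:ℝ) < (m:ℝ) := by exact_mod_cast hm1
  have hmlow : (1 - 2*δ) * (N:ℝ) ≤ (m:ℝ) := by
    have h1 : (N:ℝ) - k ≤ (m:ℝ) := by
      rw [← hncast]; exact_mod_cast hnm
    calc (1 - 2*δ) * (N:ℝ) = N - 2*δ*N := by ring
      _ ≤ (N:ℝ) - k := by linarith [hk2]
      _ ≤ (m:ℝ) := h1
  have htlow : 1 - 2*δ ≤ (m:ℝ) / (N:ℝ) := by
    rw [le_div_iff₀ hNr]; linarith [hmlow]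
  have htup : (m:ℝ) / (N:ℝ) ≤ 1 := by
    rw [div_le_one hNr]; exact hmupper
  have h2δ : (0:ℝ) < 1 - 2*δ := by linarith [hδle]
  -- the chain
  have hbm : c' ≤ b m := hrich m hmS
  have hxm : (0:ℝ) ≤ (a m : ℝ) / (m.factorial : ℝ) := by positivity
  have hbmpow : (a m : ℝ) / (m.factorial : ℝ) = b m ^ ((m : ℝ)) := by
    simp only [hbdef]
    rw [← Real.rpow_mul hxm, one_div, inv_mul_cancel₀ hmr.ne', Real.rpow_one]
  have hstep1 : (a m : ℝ)/(m.factorial : ℝ) * ((m:ℝ)/(N:ℝ)) ≤ (a N:ℝ)/(N.factorial : ℝ) :=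
    real_step a hstep m N hm1 hmN
  have h1N : (0:ℝ) ≤ 1/(N:ℝ) := by positivity
  have hc1 : ((a m : ℝ)/(m.factorial:ℝ) * ((m:ℝ)/(N:ℝ))) ^ ((1:ℝ)/(N:ℝ)) ≤ b N :=
    Real.rpow_le_rpow (by positivity) hstep1 h1N
  have hc2 : ((a m : ℝ)/(m.factorial:ℝ) * ((m:ℝ)/(N:ℝ))) ^ ((1:ℝ)/(N:ℝ))
      = (b m ^ ((m:ℝ))) ^ ((1:ℝ)/(N:ℝ)) * (((m:ℝ)/(N:ℝ)) ^ ((1:ℝ)/(N:ℝ))) := by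
    rw [hbmpow, Real.mul_rpow (by rw [← hbmpow]; exact hxm) (by positivity)]
  have hc3 : (b m ^ ((m:ℝ))) ^ ((1:ℝ)/(N:ℝ)) = b m ^ ((m:ℝ)/(N:ℝ)) := by
    rw [← Real.rpow_mul (hbnn m)]
    congr 1
    ring
  have hA : c' ^ ((m:ℝ)/(N:ℝ)) ≤ b m ^ ((m:ℝ)/(N:ℝ)) :=
    Real.rpow_le_rpow hc'pos.le hbm (by positivity)
  have hA2 : min (c' ^ (1 - 2*δ)) c' ≤ c' ^ ((m:ℝ)/(N:ℝ)) := by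
    rcases le_total c' 1 with h | h
    · refine le_trans (min_le_right _ _) ?_
      calc c' = c' ^ (1:ℝ) := (Real.rpow_one c').symm
        _ ≤ c' ^ ((m:ℝ)/(N:ℝ)) := Real.rpow_le_rpow_of_exponent_ge hc'pos h htup
    · refine le_trans (min_le_left _ _) ?_
      exact Real.rpow_le_rpow_of_exponent_le h htlow
  have hB : (1 - 2*δ) ≤ ((m:ℝ)/(N:ℝ)) ^ ((1:ℝ)/(N:ℝ)) := by
    calc (1 - 2*δ) = (1 - 2*δ) ^ (1:ℝ) := (Real.rpow_one _).symm
      _ ≤ (1 - 2*δ) ^ ((1:ℝ)/(N:ℝ)) := by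
          apply Real.rpow_le_rpow_of_exponent_ge h2δ (by linarith)
          rw [div_le_one hNr]
          exact_mod_cast hNpos
      _ ≤ ((m:ℝ)/(N:ℝ)) ^ ((1:ℝ)/(N:ℝ)) := Real.rpow_le_rpow h2δ.le htlow h1N
  have hmin_nn : (0:ℝ) ≤ min (c' ^ (1 - 2*δ)) c' := le_min (Real.rpow_nonneg hc'pos.le _) hc'pos.le
  calc c < f δ := hδfc
    _ = min (c' ^ (1 - 2*δ)) c' * (1 - 2*δ) := rfl
    _ ≤ c' ^ ((m:ℝ)/(N:ℝ)) * (((m:ℝ)/(N:ℝ)) ^ ((1:ℝ)/(N:ℝ))) :=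
        mul_le_mul hA2 hB h2δ.le (Real.rpow_nonneg hc'pos.le _)
    _ ≤ b m ^ ((m:ℝ)/(N:ℝ)) * (((m:ℝ)/(N:ℝ)) ^ ((1:ℝ)/(N:ℝ))) :=
        mul_le_mul_of_nonneg_right hA (Real.rpow_nonneg (by positivity) _)
    _ = ((a m : ℝ)/(m.factorial:ℝ) * ((m:ℝ)/(N:ℝ))) ^ ((1:ℝ)/(N:ℝ)) := by rw [hc2, hc3]
    _ ≤ b N := hc1

/-- Let `𝒢` be a class of graphs (closed under isomorphism) which is
closed under adding a leaf, with counts `a n = |𝒢_n|` and EGF radius of convergence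
`ρ ∈ (0,∞)`.  If `𝒢` has a weak growth constant then it has a growth constant `ρ⁻¹`. -/
theorem stmt_7 (𝒢 : ∀ ⦃V : Type⦄ [Fintype V], SimpleGraph V → Prop)
    (hiso : ∀ (V W : Type) [Fintype V] [Fintype W] (G : SimpleGraph V)
      (H : SimpleGraph W), Nonempty (G ≃g H) → 𝒢 G → 𝒢 H)
    (hleaf : ∀ (V : Type) [Fintype V] (G : SimpleGraph V) (u : V),
      𝒢 G → 𝒢 (addLeaf G u))
    (a : ℕ → ℕ) (ha : ∀ n, a n = Set.ncard {G : SimpleGraph (Fin n) | 𝒢 G})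
    (ρ : ℝ) (hρpos : 0 < ρ)
    (hρ : limsup (fun n : ℕ =>
        ((((a n : ℝ) / (Nat.factorial n : ℝ)) ^ ((1 : ℝ) / (n : ℝ)) : ℝ) : EReal)) atTop
        = ((ρ⁻¹ : ℝ) : EReal))
    (hwgc : HasWeakGrowthConstant a ρ) :
    Tendsto (fun n : ℕ => ((a n : ℝ) / (Nat.factorial n : ℝ)) ^ ((1 : ℝ) / (n : ℝ)))
      atTop (nhds ρ⁻¹) := by
  have hstep : ∀ n, n * a n ≤ a (n + 1) := leaf_step 𝒢 hiso hleaf a ha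
  set b : ℕ → ℝ := fun n => ((a n : ℝ) / (Nat.factorial n : ℝ)) ^ ((1 : ℝ) / (n : ℝ)) with hbdef
  have hL : (0:ℝ) < ρ⁻¹ := inv_pos.2 hρpos
  have hliminf : ((ρ⁻¹ : ℝ) : EReal) ≤ liminf (fun n : ℕ => ((b n : ℝ) : EReal)) atTop := by
    rw [le_liminf_iff]
    intro y hy
    obtain ⟨x, hyx, hxL⟩ := EReal.exists_between_coe_real hy
    have hxLr : x < ρ⁻¹ := by exact_mod_cast hxL
    filter_upwards [lower_bound a ρ hρpos hstep hwgc x hxLr] with N hN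
    exact hyx.trans (by exact_mod_cast hN)
  have h3 : liminf (fun n : ℕ => ((b n : ℝ) : EReal)) atTop = ((ρ⁻¹ : ℝ) : EReal) :=
    le_antisymm ((liminf_le_limsup (by isBoundedDefault) (by isBoundedDefault)).trans_eq hρ)
      hliminf
  have h4 : Tendsto (fun n : ℕ => ((b n : ℝ) : EReal)) atTop (nhds ((ρ⁻¹ : ℝ) : EReal)) :=
    tendsto_of_liminf_eq_limsup h3 hρ
  exact EReal.tendsto_coe.1 h4
end

section
/- Let G be a graph such that the number of vertices in its 2-core is strictly greater than twice the number of vertices in its fragment (the graph left after deleting a largest component). Then the fragment of the 2-core of G equals the 2-core of the fragment of G. -/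
/-- The set of vertices of the 2-core of the subgraph `A`: vertices lying in some
vertex set `W ⊆ A.verts` inducing minimum degree at least 2 in `A`. -/
def degTwoSet {V : Type} {G : SimpleGraph V} (A : G.Subgraph) : Set V :=
  {v | ∃ W : Set V, W ⊆ A.verts ∧ v ∈ W ∧
    ∀ u ∈ W, 2 ≤ Set.ncard {w | w ∈ W ∧ A.Adj u w}}

/-- The 2-core of a subgraph: the maximal subgraph of minimum degree at least 2. -/
def coreOf {V : Type} {G : SimpleGraph V} (A : G.Subgraph) : G.Subgraph :=
  A.induce (degTwoSet A)

/-- `B` is the vertex set of a connected component of the subgraph `A`: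
a maximal subset of `A.verts` inducing a connected subgraph. -/
def IsCompOf {V : Type} {G : SimpleGraph V} (A : G.Subgraph) (B : Set V) : Prop :=
  B ⊆ A.verts ∧ (A.induce B).Connected ∧
    ∀ C : Set V, B ⊆ C → C ⊆ A.verts → (A.induce C).Connected → C = B

/-- `B` is the vertex set of a component of `A` with the most vertices. -/
def IsBigCompOf {V : Type} {G : SimpleGraph V} (A : G.Subgraph) (B : Set V) : Prop :=
  IsCompOf A B ∧ ∀ C : Set V, IsCompOf A C → C.ncard ≤ B.ncard

open SimpleGraph

variable {V : Type} [Fintype V] {G : SimpleGraph V}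

lemma degTwoSet_subset (A : G.Subgraph) : degTwoSet A ⊆ A.verts := by
  rintro v ⟨W, hW, hv, _⟩; exact hW hv

lemma witness_subset {A : G.Subgraph} {W : Set V} (hW : W ⊆ A.verts)
    (h : ∀ u ∈ W, 2 ≤ Set.ncard {w | w ∈ W ∧ A.Adj u w}) : W ⊆ degTwoSet A :=
  fun v hv => ⟨W, hW, hv, h⟩

lemma deg_degTwoSet {A : G.Subgraph} {u : V} (hu : u ∈ degTwoSet A) :
    2 ≤ Set.ncard {w | w ∈ degTwoSet A ∧ A.Adj u w} := by
  obtain ⟨W, hW, huW, hdeg⟩ := hu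
  have hWsub : W ⊆ degTwoSet A := witness_subset hW hdeg
  refine le_trans (hdeg u huW) (Set.ncard_le_ncard ?_ (Set.toFinite _))
  rintro w ⟨hw1, hw2⟩; exact ⟨hWsub hw1, hw2⟩

lemma internal_two {u v : V} (p : G.Walk u v) (hp : p.IsPath)
    {w : V} (hw : w ∈ p.support) (hwu : w ≠ u) (hwv : w ≠ v) :
    ∃ a b, a ∈ p.support ∧ b ∈ p.support ∧ a ≠ b ∧ G.Adj w a ∧ G.Adj w b := by
  induction p with
  | nil => simp at hw; exact absurd hw hwu
  | @cons u x v h q ih =>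
    rw [Walk.cons_isPath_iff] at hp
    obtain ⟨hq, hu⟩ := hp
    rw [Walk.support_cons, List.mem_cons] at hw
    rcases hw with hw | hw
    · exact absurd hw hwu
    by_cases hwx : w = x
    · subst hwx
      cases q with
      | nil => exact absurd rfl hwv
      | @cons _ y _ h' q' =>
        have hy1 : y ∈ (Walk.cons h' q').support := by
          rw [Walk.support_cons]
          exact List.mem_cons_of_mem _ (Walk.start_mem_support q')
        have huy : u ≠ y := by
          rintro rfl; exact hu hy1
        refine ⟨u, y, Walk.start_mem_support _, ?_, huy, h.symm, h'⟩
        rw [Walk.support_cons]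
        exact List.mem_cons_of_mem _ hy1
    · obtain ⟨a, b, ha, hb, hab, h1, h2⟩ := ih hq hw hwx hwv
      refine ⟨a, b, ?_, ?_, hab, h1, h2⟩
      · rw [Walk.support_cons]; exact List.mem_cons_of_mem _ ha
      · rw [Walk.support_cons]; exact List.mem_cons_of_mem _ hb

lemma reach_of_walk {H : G.Subgraph}
    (hH : ∀ a b, G.Adj a b → a ∈ H.verts → b ∈ H.verts → H.Adj a b)
    {x y : V} (p : G.Walk x y) (hs : ∀ z ∈ p.support, z ∈ H.verts)
    (hx : x ∈ H.verts) (hy : y ∈ H.verts) : H.coe.Reachable ⟨x, hx⟩ ⟨y, hy⟩ := by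
  induction p with
  | nil => rfl
  | @cons u b v h q ih =>
    have hb : b ∈ H.verts := hs b (by
      rw [Walk.support_cons]
      exact List.mem_cons_of_mem _ (Walk.start_mem_support _))
    refine (Adj.reachable ?_).trans (ih (fun z hz => hs z (by
      rw [Walk.support_cons]; exact List.mem_cons_of_mem _ hz)) hb hy)
    rw [Subgraph.coe_adj]
    exact hH u b h hx hb

lemma walk_stays {H : G.Subgraph} (S : Set V)
    (hcross : ∀ a b, H.Adj a b → a ∈ S → b ∈ S)
    {x y : H.verts} (h : H.coe.Reachable x y) (hx : (x : V) ∈ S) : (y : V) ∈ S := by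
  obtain ⟨p⟩ := h
  induction p with
  | nil => exact hx
  | @cons a b c h q ih => exact ih (hcross a b (by rwa [Subgraph.coe_adj] at h) hx)

lemma no_cross {B : Set V} (hB : IsCompOf (⊤ : G.Subgraph) B)
    {u v : V} (hu : u ∈ B) (h : G.Adj u v) : v ∈ B := by
  by_contra hv
  obtain ⟨hBsub, hBconn, hBmax⟩ := hB
  have hle : ((⊤ : G.Subgraph).induce B) ≤ (⊤ : G.Subgraph).induce (insert v B) :=
    Subgraph.induce_mono le_rfl (Set.subset_insert _ _)
  have hconn : ((⊤ : G.Subgraph).induce (insert v B)).Connected := by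
    rw [Subgraph.connected_iff]
    refine ⟨⟨?_⟩, ⟨v, Set.mem_insert _ _⟩⟩
    have key : ∀ z : ((⊤ : G.Subgraph).induce (insert v B)).verts,
        ((⊤ : G.Subgraph).induce (insert v B)).coe.Reachable z
          ⟨u, Set.mem_insert_of_mem _ hu⟩ := by
      rintro ⟨z, hz⟩
      rcases Set.mem_insert_iff.1 hz with rfl | hzB
      · refine Adj.reachable ?_
        rw [Subgraph.coe_adj, Subgraph.induce_adj]
        exact ⟨hz, Set.mem_insert_of_mem _ hu, Subgraph.top_adj.2 h.symm⟩
      · have hr := hBconn.coe.preconnected ⟨z, hzB⟩ ⟨u, hu⟩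
        exact hr.map (Subgraph.inclusion hle)
    intro x y
    exact (key x).trans (key y).symm
  have := hBmax (insert v B) (Set.subset_insert _ _) (fun _ _ => trivial) hconn
  rw [← this] at hv
  exact hv (Set.mem_insert _ _)

lemma walk_in_comp {B : Set V} (hc : ((⊤ : G.Subgraph).induce B).Connected)
    {x y : V} (hx : x ∈ B) (hy : y ∈ B) :
    ∃ p : G.Walk x y, ∀ z ∈ p.support, z ∈ B := by
  obtain ⟨p0⟩ := hc.coe.preconnected ⟨x, hx⟩ ⟨y, hy⟩
  refine ⟨p0.map (Subgraph.hom _), ?_⟩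
  intro z hz
  replace hz := List.mem_map.1 ((congrArg (z ∈ ·) (Walk.support_map (Subgraph.hom _) p0)).mp hz)
  obtain ⟨w, _, rfl⟩ := hz
  exact w.2

lemma support_in_core {x y : V} (hx : x ∈ degTwoSet (⊤ : G.Subgraph))
    (hy : y ∈ degTwoSet (⊤ : G.Subgraph)) (p : G.Walk x y) (hp : p.IsPath) :
    ∀ z ∈ p.support, z ∈ degTwoSet (⊤ : G.Subgraph) := by
  set K := degTwoSet (⊤ : G.Subgraph) with hK
  set W : Set V := K ∪ {z | z ∈ p.support} with hW
  have hsub : W ⊆ K := by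
    apply witness_subset (A := (⊤ : G.Subgraph)) (fun _ _ => Set.mem_univ _)
    intro u hu
    by_cases huK : u ∈ K
    · refine le_trans (deg_degTwoSet huK) (Set.ncard_le_ncard ?_ (Set.toFinite _))
      rintro w ⟨hw1, hw2⟩
      exact ⟨Or.inl hw1, hw2⟩
    · have husup : u ∈ p.support := by
        rcases hu with hu | hu
        · exact absurd hu huK
        · exact hu
      have hux : u ≠ x := by rintro rfl; exact huK hx
      have huy : u ≠ y := by rintro rfl; exact huK hy
      obtain ⟨a, b, ha, hb, hab, h1, h2⟩ := internal_two p hp husup hux huy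
      have hpair : ({a, b} : Set V) ⊆ {w | w ∈ W ∧ (⊤ : G.Subgraph).Adj u w} := by
        rintro c (rfl | rfl)
        · exact ⟨Or.inr ha, Subgraph.top_adj.2 h1⟩
        · exact ⟨Or.inr hb, Subgraph.top_adj.2 h2⟩
      calc 2 = ({a, b} : Set V).ncard := (Set.ncard_pair hab).symm
        _ ≤ _ := Set.ncard_le_ncard hpair (Set.toFinite _)
  intro z hz
  exact hsub (Or.inr hz)

lemma frag_core {B : Set V} (hnc : ∀ u v, u ∈ B → G.Adj u v → v ∈ B) :
    degTwoSet ((⊤ : G.Subgraph).induce (Set.univ \ B)) =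
      degTwoSet (⊤ : G.Subgraph) \ B := by
  apply Set.Subset.antisymm
  · rintro v ⟨W, hWsub, hvW, hdeg⟩
    have hWK : W ⊆ degTwoSet (⊤ : G.Subgraph) := by
      apply witness_subset (A := (⊤ : G.Subgraph)) (fun _ _ => Set.mem_univ _)
      intro u hu
      refine le_trans (hdeg u hu) (Set.ncard_le_ncard ?_ (Set.toFinite _))
      rintro w ⟨hw1, hw2⟩
      rw [Subgraph.induce_adj] at hw2
      exact ⟨hw1, hw2.2.2⟩
    exact ⟨hWK hvW, (hWsub hvW).2⟩
  · intro v hv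
    refine witness_subset (A := (⊤ : G.Subgraph).induce (Set.univ \ B))
      (W := degTwoSet (⊤ : G.Subgraph) \ B) (fun z hz => ⟨trivial, hz.2⟩) ?_ hv
    intro u hu
    refine le_trans (deg_degTwoSet hu.1) (Set.ncard_le_ncard ?_ (Set.toFinite _))
    rintro w ⟨hw1, hw2⟩
    have hGadj : G.Adj u w := Subgraph.top_adj.1 hw2
    have hwB : w ∉ B := fun hwB => hu.2 (hnc w u hwB hGadj.symm)
    refine ⟨⟨hw1, hwB⟩, ?_⟩
    rw [Subgraph.induce_adj]
    exact ⟨⟨trivial, hu.2⟩, ⟨trivial, hwB⟩, hw2⟩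

/-- If `core(G) > 2 · frag(G)`, then the fragment of the 2-core of `G`
equals the 2-core of the fragment of `G`.  Here `B` is (the vertex set of) a largest
component of `G`, so `Frag(G)` is the subgraph induced on `univ \ B`, and `Bc` is a
largest component of `Core(G)`. -/
theorem stmt_13 {V : Type} [Fintype V] (G : SimpleGraph V) (B Bc : Set V)
    (hB : IsBigCompOf (⊤ : G.Subgraph) B)
    (hBc : IsBigCompOf (coreOf (⊤ : G.Subgraph)) Bc)
    (hcf : 2 * Set.ncard ((Set.univ : Set V) \ B) <
      Set.ncard (coreOf (⊤ : G.Subgraph)).verts) :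
    (coreOf (⊤ : G.Subgraph)).induce ((coreOf (⊤ : G.Subgraph)).verts \ Bc) =
      coreOf ((⊤ : G.Subgraph).induce ((Set.univ : Set V) \ B)) := by
  classical
  have hnc : ∀ u v, u ∈ B → G.Adj u v → v ∈ B := fun u v hu h => no_cross hB.1 hu h
  set K := degTwoSet (⊤ : G.Subgraph) with hK
  have hverts : (coreOf (⊤ : G.Subgraph)).verts = K := rfl
  rw [hverts] at hcf
  -- counting
  have hcount : (K ∩ B).ncard + (K \ B).ncard = K.ncard :=
    Set.ncard_inter_add_ncard_diff_eq_ncard K B (Set.toFinite K)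
  have hle1 : (K \ B).ncard ≤ (Set.univ \ B).ncard :=
    Set.ncard_le_ncard (fun z hz => ⟨trivial, hz.2⟩) (Set.toFinite _)
  have hKBpos : (Set.univ \ B).ncard < (K ∩ B).ncard := by omega
  have hne : (K ∩ B).Nonempty := by
    apply Set.nonempty_of_ncard_ne_zero
    omega
  -- cross lemmas for subgraphs of the core
  have hcross : ∀ (C : Set V) (a b : V),
      ((coreOf (⊤ : G.Subgraph)).induce C).Adj a b → G.Adj a b := by
    intro C a b hab
    rw [Subgraph.induce_adj] at hab
    have := hab.2.2
    rw [coreOf, Subgraph.induce_adj] at this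
    exact Subgraph.top_adj.1 this.2.2
  -- K ∩ B is connected in the core
  have hKBconn : ((coreOf (⊤ : G.Subgraph)).induce (K ∩ B)).Connected := by
    rw [Subgraph.connected_iff]
    refine ⟨⟨?_⟩, hne⟩
    rintro ⟨x, hxK, hxB⟩ ⟨y, hyK, hyB⟩
    obtain ⟨p0, hp0⟩ := walk_in_comp hB.1.2.1 hxB hyB
    have hp : p0.bypass.IsPath := Walk.bypass_isPath p0
    have hpsup : ∀ z ∈ p0.bypass.support, z ∈ B :=
      fun z hz => hp0 z (Walk.support_bypass_subset _ hz)
    have hpK : ∀ z ∈ p0.bypass.support, z ∈ K := support_in_core hxK hyK p0.bypass hp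
    refine reach_of_walk (H := (coreOf (⊤ : G.Subgraph)).induce (K ∩ B)) ?_ p0.bypass (fun z hz => ⟨hpK z hz, hpsup z hz⟩)
      ⟨hxK, hxB⟩ ⟨hyK, hyB⟩
    intro a b hab ha hb
    rw [Subgraph.induce_adj]
    refine ⟨ha, hb, ?_⟩
    rw [coreOf, Subgraph.induce_adj]
    exact ⟨ha.1, hb.1, Subgraph.top_adj.2 hab⟩
  have hKBcomp : IsCompOf (coreOf (⊤ : G.Subgraph)) (K ∩ B) := by
    refine ⟨fun z hz => hz.1, hKBconn, ?_⟩
    intro C hCsup hCsub hCconn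
    refine Set.Subset.antisymm ?_ hCsup
    intro v hv
    obtain ⟨u0, hu0⟩ := hne
    have hreach := hCconn.coe.preconnected ⟨u0, hCsup hu0⟩ ⟨v, hv⟩
    have hvB : v ∈ B :=
      walk_stays B (fun a b hab haB => hnc a b haB (hcross C a b hab)) hreach hu0.2
    exact ⟨hCsub hv, hvB⟩
  -- determine Bc
  obtain ⟨z0, hz0⟩ := hBc.1.2.1.nonempty
  have hz0Bc : (z0 : V) ∈ Bc := hz0
  have hBcEq : K ∩ B = Bc := by
    by_cases hz0B : z0 ∈ B
    · have hBcsub : Bc ⊆ K ∩ B := by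
        intro w hw
        have hreach := hBc.1.2.1.coe.preconnected ⟨z0, hz0⟩ ⟨w, hw⟩
        have hwB : w ∈ B :=
          walk_stays B (fun a b hab haB => hnc a b haB (hcross Bc a b hab)) hreach hz0B
        exact ⟨hBc.1.1 hw, hwB⟩
      exact hBc.1.2.2 (K ∩ B) hBcsub (fun z hz => hz.1) hKBconn
    · exfalso
      have hBcsub : Bc ⊆ K \ B := by
        intro w hw
        have hreach := hBc.1.2.1.coe.preconnected ⟨z0, hz0⟩ ⟨w, hw⟩
        have hwB : w ∉ B := by
          have := walk_stays (Set.univ \ B)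
            (fun a b hab haB => by
              refine ⟨trivial, fun hbB => haB.2 (hnc b a hbB (hcross Bc a b hab).symm)⟩)
            hreach ⟨trivial, hz0B⟩
          exact this.2
        exact ⟨hBc.1.1 hw, hwB⟩
      have h1 : Bc.ncard ≤ (K \ B).ncard := Set.ncard_le_ncard hBcsub (Set.toFinite _)
      have h2 : (K ∩ B).ncard ≤ Bc.ncard := hBc.2 (K ∩ B) hKBcomp
      omega
  -- final identification
  have hdiff : K \ Bc = K \ B := by
    rw [← hBcEq]
    ext z
    simp only [Set.mem_diff, Set.mem_inter_iff, not_and]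
    tauto
  have hfrag : degTwoSet ((⊤ : G.Subgraph).induce (Set.univ \ B)) = K \ B :=
    frag_core hnc
  show ((⊤ : G.Subgraph).induce K).induce (K \ Bc) =
    ((⊤ : G.Subgraph).induce (Set.univ \ B)).induce
      (degTwoSet ((⊤ : G.Subgraph).induce (Set.univ \ B)))
  rw [hdiff, hfrag]
  ext x y
  · simp
  · simp only [Subgraph.induce_adj, Subgraph.top_adj, Set.mem_diff, Set.mem_univ,
      true_and]
    constructor
    · rintro ⟨⟨hxK, hxB⟩, ⟨hyK, hyB⟩, _, _, hadj⟩
      exact ⟨⟨hxK, hxB⟩, ⟨hyK, hyB⟩, hxB, hyB, hadj⟩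
    · rintro ⟨⟨hxK, hxB⟩, ⟨hyK, hyB⟩, _, _, hadj⟩
      exact ⟨⟨hxK, hxB⟩, ⟨hyK, hyB⟩, hxK, hyK, hadj⟩
end

section
/- Let G be a connected graph, let k ≥ 3, and call a nonempty vertex set W ⊆ V(G) safe if the induced subgraph G[W] has minimum degree at least 2, is not isomorphic to the k-cycle C_k, and has no pendant appearance of H•_1 (a k-cycle plus a pendant root vertex attached to one cycle vertex). Then the union of any two safe sets is safe. -/
/-- The graph induced by `G` on `W` has a pendant appearance of `H•₁`
(a `k`-cycle with a pendant root vertex `r` attached): there is a set `Y ⊆ W` and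
`r ∈ Y` such that `Y \ {r}` induces a `k`-cycle, `r` has exactly one neighbour
inside `Y`, and the unique edge of `G[W]` leaving `Y` is a bridge at `r`. -/
def HasPendantH1 {V : Type} (G : SimpleGraph V) (k : ℕ) (W : Set V) : Prop :=
  ∃ (Y : Set V) (r z : V), Y ⊆ W ∧ r ∈ Y ∧ z ∈ W ∧ z ∉ Y ∧ G.Adj r z ∧
    (∀ y ∈ Y, ∀ w ∈ W, w ∉ Y → G.Adj y w → y = r ∧ w = z) ∧
    Set.ncard {y | y ∈ Y ∧ y ≠ r ∧ G.Adj r y} = 1 ∧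
    Nonempty (G.induce (Y \ {r}) ≃g SimpleGraph.cycleGraph k)

/-- `W` is safe: nonempty, `G[W]` has minimum degree at least 2, `G[W]` is not
a `k`-cycle, and `G[W]` has no pendant appearance of `H•₁`. -/
def SafeSet {V : Type} (G : SimpleGraph V) (k : ℕ) (W : Set V) : Prop :=
  W.Nonempty ∧
  (∀ v ∈ W, 2 ≤ Set.ncard {u | u ∈ W ∧ G.Adj v u}) ∧
  ¬ Nonempty (G.induce W ≃g SimpleGraph.cycleGraph k) ∧
  ¬ HasPendantH1 G k W

open scoped Fin.NatCast Fin.CommRing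

lemma fill1 {n : ℕ} (S : Set (Fin (n+3))) (a : Fin (n+3)) (ha : a ∈ S)
    (h1 : a + 1 ∈ S) (hstep : ∀ i ∈ S, i ≠ a → i + 1 ∈ S) : ∀ i, i ∈ S := by
  have key : ∀ m : ℕ, a + ((m+1 : ℕ) : Fin (n+3)) ∈ S := by
    intro m
    induction m with
    | zero => simpa using h1
    | succ m ih =>
      have hrw : ((m+1+1 : ℕ) : Fin (n+3)) = ((m+1 : ℕ) : Fin (n+3)) + 1 := by push_cast; ring
      rw [hrw, ← add_assoc]
      by_cases h : a + ((m+1 : ℕ) : Fin (n+3)) = a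
      · rw [h]; exact h1
      · exact hstep _ ih h
  intro i
  by_cases h : i = a
  · exact h ▸ ha
  · have hne : i - a ≠ 0 := sub_ne_zero.mpr h
    have hval : (i - a).val ≠ 0 := by
      intro h0; exact hne (Fin.ext h0)
    obtain ⟨m, hm⟩ : ∃ m, (i - a).val = m + 1 := ⟨(i-a).val - 1, by omega⟩
    have := key m
    rw [← hm, Fin.cast_val_eq_self, add_sub_cancel] at this
    exact this

lemma fill {n : ℕ} (S : Set (Fin (n+3))) (a : Fin (n+3)) (ha : a ∈ S)
    (h1 : a + 1 ∈ S ∨ a - 1 ∈ S)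
    (hstep : ∀ i ∈ S, i ≠ a → i + 1 ∈ S ∧ i - 1 ∈ S) : ∀ i, i ∈ S := by
  rcases h1 with h1 | h1
  · exact fill1 S a ha h1 (fun i hi hne => (hstep i hi hne).1)
  · have main := fill1 {i | -i ∈ S} (-a) (by simp only [Set.mem_setOf_eq, neg_neg]; exact ha)
      (by
        show -(-a + 1) ∈ S
        have e : -(-a + 1) = a - 1 := by ring
        rw [e]; exact h1)
      (fun i hi hne => by
        show -(i + 1) ∈ S
        have h2 := (hstep (-i) hi (fun h => hne (by rw [← h, neg_neg]))).2
        have e : -(i + 1) = -i - 1 := by ring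
        rw [e]; exact h2)
    intro i
    have := main (-i)
    simpa using this

lemma cyc_adj {n : ℕ} {u v : Fin (n+3)} :
    (SimpleGraph.cycleGraph (n+3)).Adj u v ↔ v = u - 1 ∨ v = u + 1 := by
  rw [SimpleGraph.cycleGraph_adj']
  have e1 : ((u - v).val = 1) ↔ u - v = 1 := by
    rw [Fin.ext_iff, Fin.val_one]
  have e2 : ((v - u).val = 1) ↔ v - u = 1 := by
    rw [Fin.ext_iff, Fin.val_one]
  rw [e1, e2]
  constructor
  · rintro (h | h)
    · left; linear_combination -h
    · right; linear_combination h
  · rintro (h | h)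
    · left; linear_combination -h
    · right; linear_combination h

lemma sub_one_ne_add_one {n : ℕ} (i : Fin (n+3)) : i - 1 ≠ i + 1 := by
  intro h
  have h3 : (1 : Fin (n+3)) + 1 = 0 := by linear_combination -h
  have hval : ((1 : Fin (n+3)) + 1).val = 2 := by
    rw [Fin.add_def, Fin.val_one]
    exact Nat.mod_eq_of_lt (by omega)
  rw [h3] at hval
  simp at hval

lemma cyc_nbr {V : Type} (G : SimpleGraph V) {n : ℕ} {U : Set V}
    (e : G.induce U ≃g SimpleGraph.cycleGraph (n+3)) {v u : V} (hv : v ∈ U) (hu : u ∈ U)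
    (h : G.Adj v u) :
    u = ↑(e.symm (e ⟨v, hv⟩ - 1)) ∨ u = ↑(e.symm (e ⟨v, hv⟩ + 1)) := by
  have hadj : (SimpleGraph.cycleGraph (n+3)).Adj (e ⟨v, hv⟩) (e ⟨u, hu⟩) := by
    rw [e.map_adj_iff]
    exact h
  rw [cyc_adj] at hadj
  rcases hadj with h' | h'
  · left
    rw [← h', e.symm_apply_apply]
  · right
    rw [← h', e.symm_apply_apply]

lemma cycle_sub {V : Type} [Fintype V] (G : SimpleGraph V) {n : ℕ} {Wu W : Set V}
    (e : G.induce Wu ≃g SimpleGraph.cycleGraph (n+3)) (hsub : W ⊆ Wu) (hne : W.Nonempty)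
    (hdeg : ∀ v ∈ W, 2 ≤ Set.ncard {u | u ∈ W ∧ G.Adj v u}) : W = Wu := by
  classical
  set S : Set (Fin (n+3)) := {i | (e.symm i : V) ∈ W} with hS
  have key : ∀ i ∈ S, i + 1 ∈ S ∧ i - 1 ∈ S := by
    intro i hi
    set w : V := (e.symm i : V) with hw
    have hwW : w ∈ W := hi
    have hwU : w ∈ Wu := (e.symm i).2
    have hei : e ⟨w, hwU⟩ = i := by
      have : (⟨w, hwU⟩ : Wu) = e.symm i := rfl
      rw [this, e.apply_symm_apply]
    have hsub2 : {u | u ∈ W ∧ G.Adj w u} ⊆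
        {(↑(e.symm (i - 1)) : V), ↑(e.symm (i + 1))} := by
      rintro u ⟨huW, hadj⟩
      have := cyc_nbr G e hwU (hsub huW) hadj
      rw [hei] at this
      rcases this with h' | h'
      · exact Or.inl h'
      · exact Or.inr h'
    have hPne : (↑(e.symm (i - 1)) : V) ≠ ↑(e.symm (i + 1)) := by
      intro h
      have := e.symm.injective (Subtype.ext h)
      exact sub_one_ne_add_one i this
    have heq : {u | u ∈ W ∧ G.Adj w u} =
        {(↑(e.symm (i - 1)) : V), ↑(e.symm (i + 1))} := by
      apply Set.eq_of_subset_of_ncard_le hsub2 _ (Set.toFinite _)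
      calc Set.ncard {(↑(e.symm (i - 1)) : V), ↑(e.symm (i + 1))} ≤ 2 := by
            apply le_trans (Set.ncard_insert_le _ _)
            simp
        _ ≤ _ := hdeg w hwW
    constructor
    · have : (↑(e.symm (i + 1)) : V) ∈ {u | u ∈ W ∧ G.Adj w u} := by
        rw [heq]; right; rfl
      exact this.1
    · have : (↑(e.symm (i - 1)) : V) ∈ {u | u ∈ W ∧ G.Adj w u} := by
        rw [heq]; left; rfl
      exact this.1
  obtain ⟨v, hv⟩ := hne
  have hvU : v ∈ Wu := hsub hv
  have haS : e ⟨v, hvU⟩ ∈ S := by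
    show (e.symm (e ⟨v, hvU⟩) : V) ∈ W
    rw [e.symm_apply_apply]
    exact hv
  have hall : ∀ i, i ∈ S :=
    fill S (e ⟨v, hvU⟩) haS (Or.inl (key _ haS).1) (fun i hi _ => key i hi)
  apply Set.Subset.antisymm hsub
  intro u hu
  have := hall (e ⟨u, hu⟩)
  have h2 : (e.symm (e ⟨u, hu⟩) : V) ∈ W := this
  rwa [e.symm_apply_apply] at h2

lemma pendant_sub {V : Type} [Fintype V] (G : SimpleGraph V) {n : ℕ} {Wu W : Set V}
    (hsub : W ⊆ Wu)
    (hdeg : ∀ v ∈ W, 2 ≤ Set.ncard {u | u ∈ W ∧ G.Adj v u})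
    (hp : HasPendantH1 G (n+3) Wu)
    (Y : Set V) (r z : V) (hY : Y ⊆ Wu) (hrY : r ∈ Y) (hzWu : z ∈ Wu) (hzY : z ∉ Y)
    (hrz : G.Adj r z)
    (hedge : ∀ y ∈ Y, ∀ w ∈ Wu, w ∉ Y → G.Adj y w → y = r ∧ w = z)
    (hcard : Set.ncard {y | y ∈ Y ∧ y ≠ r ∧ G.Adj r y} = 1)
    (e : G.induce (Y \ {r}) ≃g SimpleGraph.cycleGraph (n+3))
    (hrW : r ∈ W) : HasPendantH1 G (n+3) W := by
  classical
  obtain ⟨a, haeq⟩ := Set.ncard_eq_one.mp hcard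
  have haY : a ∈ Y ∧ a ≠ r ∧ G.Adj r a := by
    have : a ∈ {y | y ∈ Y ∧ y ≠ r ∧ G.Adj r y} := by rw [haeq]; rfl
    exact this
  have haC : a ∈ Y \ {r} := ⟨haY.1, haY.2.1⟩
  -- neighbours of r in W are contained in {a, z}
  have hrnbr : {u | u ∈ W ∧ G.Adj r u} ⊆ {a, z} := by
    rintro u ⟨huW, hadj⟩
    by_cases huY : u ∈ Y
    · left
      have : u ∈ {y | y ∈ Y ∧ y ≠ r ∧ G.Adj r y} := ⟨huY, fun h => G.irrefl (h ▸ hadj), hadj⟩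
      rw [haeq] at this; exact this
    · right
      exact (hedge r hrY u (hsub huW) huY hadj).2
  have haz : a ≠ z := fun h => hzY (h ▸ haY.1)
  have hraz : {u | u ∈ W ∧ G.Adj r u} = {a, z} := by
    apply Set.eq_of_subset_of_ncard_le hrnbr _ (Set.toFinite _)
    calc Set.ncard {a, z} ≤ 2 := le_trans (Set.ncard_insert_le _ _) (by simp)
      _ ≤ _ := hdeg r hrW
  have haW : a ∈ W := by
    have : a ∈ {u | u ∈ W ∧ G.Adj r u} := by rw [hraz]; left; rfl
    exact this.1
  have hzW : z ∈ W := by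
    have : z ∈ {u | u ∈ W ∧ G.Adj r u} := by rw [hraz]; right; rfl
    exact this.1
  -- neighbours (in Wu) of a vertex v of the cycle other than a lie on the cycle
  have hCnbr : ∀ v (hv : v ∈ Y \ {r}), ∀ u ∈ W, G.Adj v u → u ≠ r →
      u = ↑(e.symm (e ⟨v, hv⟩ - 1)) ∨ u = ↑(e.symm (e ⟨v, hv⟩ + 1)) := by
    intro v hv u huW hadj hur
    by_cases huY : u ∈ Y
    · exact cyc_nbr G e hv ⟨huY, hur⟩ hadj
    · exact absurd (hedge v hv.1 u (hsub huW) huY hadj).1 hv.2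
  -- the set of cycle positions whose vertex lies in W
  set S : Set (Fin (n+3)) := {i | (e.symm i : V) ∈ W} with hSdef
  have hstep : ∀ i ∈ S, i ≠ e ⟨a, haC⟩ → i + 1 ∈ S ∧ i - 1 ∈ S := by
    intro i hi hia
    set w : V := (e.symm i : V) with hw
    have hwW : w ∈ W := hi
    have hwC : w ∈ Y \ {r} := (e.symm i).2
    have hei : e ⟨w, hwC⟩ = i := by
      have : (⟨w, hwC⟩ : (Y \ {r} : Set V)) = e.symm i := rfl
      rw [this, e.apply_symm_apply]
    have hwa : w ≠ a := by
      intro h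
      apply hia
      rw [← hei]
      congr 1
      exact Subtype.ext h
    have hsub2 : {u | u ∈ W ∧ G.Adj w u} ⊆
        {(↑(e.symm (i - 1)) : V), ↑(e.symm (i + 1))} := by
      rintro u ⟨huW, hadj⟩
      have hur : u ≠ r := by
        intro h
        have : w ∈ {y | y ∈ Y ∧ y ≠ r ∧ G.Adj r y} :=
          ⟨hwC.1, hwC.2, by rw [← h]; exact hadj.symm⟩
        rw [haeq] at this
        exact hwa this
      have := hCnbr w hwC u huW hadj hur
      rw [hei] at this
      exact this
    have heq : {u | u ∈ W ∧ G.Adj w u} =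
        {(↑(e.symm (i - 1)) : V), ↑(e.symm (i + 1))} := by
      apply Set.eq_of_subset_of_ncard_le hsub2 _ (Set.toFinite _)
      calc Set.ncard {(↑(e.symm (i - 1)) : V), ↑(e.symm (i + 1))} ≤ 2 :=
            le_trans (Set.ncard_insert_le _ _) (by simp)
        _ ≤ _ := hdeg w hwW
    constructor
    · have : (↑(e.symm (i + 1)) : V) ∈ {u | u ∈ W ∧ G.Adj w u} := by
        rw [heq]; right; rfl
      exact this.1
    · have : (↑(e.symm (i - 1)) : V) ∈ {u | u ∈ W ∧ G.Adj w u} := by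
        rw [heq]; left; rfl
      exact this.1
  have haS : e ⟨a, haC⟩ ∈ S := by
    show (e.symm (e ⟨a, haC⟩) : V) ∈ W
    rw [e.symm_apply_apply]
    exact haW
  -- a has a cycle-neighbour in W
  have h1 : e ⟨a, haC⟩ + 1 ∈ S ∨ e ⟨a, haC⟩ - 1 ∈ S := by
    by_contra hcon
    push_neg at hcon
    have hsub3 : {u | u ∈ W ∧ G.Adj a u} ⊆ {r} := by
      rintro u ⟨huW, hadj⟩
      by_cases hur : u = r
      · exact hur
      · exfalso
        rcases hCnbr a haC u huW hadj hur with h' | h'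
        · exact hcon.2 (by show (e.symm _ : V) ∈ W; rw [← h']; exact huW)
        · exact hcon.1 (by show (e.symm _ : V) ∈ W; rw [← h']; exact huW)
    have : Set.ncard {u | u ∈ W ∧ G.Adj a u} ≤ 1 := by
      calc Set.ncard {u | u ∈ W ∧ G.Adj a u} ≤ Set.ncard {r} :=
            Set.ncard_le_ncard hsub3 (Set.toFinite _)
        _ = 1 := Set.ncard_singleton r
    have := hdeg a haW
    omega
  have hall : ∀ i, i ∈ S := fill S (e ⟨a, haC⟩) haS h1 hstep
  have hCW : Y \ {r} ⊆ W := by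
    intro c hc
    have := hall (e ⟨c, hc⟩)
    have h2 : (e.symm (e ⟨c, hc⟩) : V) ∈ W := this
    rwa [e.symm_apply_apply] at h2
  have hYW : Y ⊆ W := by
    intro y hy
    by_cases hyr : y = r
    · exact hyr ▸ hrW
    · exact hCW ⟨hy, hyr⟩
  exact ⟨Y, r, z, hYW, hrY, hzW, hzY, hrz,
    fun y hy w hw hwY hadj => hedge y hy w (hsub hw) hwY hadj, hcard, ⟨e⟩⟩

/-- In a connected graph `G`, for `k ≥ 3`, the union of two safe
vertex sets is safe. -/
theorem stmt_14 {V : Type} [Fintype V] (G : SimpleGraph V) (hG : G.Connected)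
    (k : ℕ) (hk : 3 ≤ k) (W₁ W₂ : Set V)
    (h₁ : SafeSet G k W₁) (h₂ : SafeSet G k W₂) :
    SafeSet G k (W₁ ∪ W₂) := by
  obtain ⟨n, rfl⟩ : ∃ n, k = n + 3 := ⟨k - 3, by omega⟩
  obtain ⟨hne₁, hdeg₁, hcyc₁, hpen₁⟩ := h₁
  obtain ⟨hne₂, hdeg₂, hcyc₂, hpen₂⟩ := h₂
  have hdegU : ∀ v ∈ W₁ ∪ W₂, 2 ≤ Set.ncard {u | u ∈ W₁ ∪ W₂ ∧ G.Adj v u} := by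
    rintro v (hv | hv)
    · exact le_trans (hdeg₁ v hv) (Set.ncard_le_ncard
        (fun u hu => ⟨Or.inl hu.1, hu.2⟩) (Set.toFinite _))
    · exact le_trans (hdeg₂ v hv) (Set.ncard_le_ncard
        (fun u hu => ⟨Or.inr hu.1, hu.2⟩) (Set.toFinite _))
  refine ⟨hne₁.mono Set.subset_union_left, hdegU, ?_, ?_⟩
  · rintro ⟨e⟩
    have hW : W₁ = W₁ ∪ W₂ :=
      cycle_sub G e Set.subset_union_left hne₁ hdeg₁
    apply hcyc₁
    rw [hW]
    exact ⟨e⟩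
  · intro hp
    obtain ⟨Y, r, z, hY, hrY, hzWu, hzY, hrz, hedge, hcard, ⟨e⟩⟩ := hp
    rcases hY hrY with hrW | hrW
    · exact hpen₁ (pendant_sub G Set.subset_union_left hdeg₁
        ⟨Y, r, z, hY, hrY, hzWu, hzY, hrz, hedge, hcard, ⟨e⟩⟩
        Y r z hY hrY hzWu hzY hrz hedge hcard e hrW)
    · exact hpen₂ (pendant_sub G Set.subset_union_right hdeg₂
        ⟨Y, r, z, hY, hrY, hzWu, hzY, hrz, hedge, hcard, ⟨e⟩⟩
        Y r z hY hrY hzWu hzY hrz hedge hcard e hrW)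
end

section
/- Let G be a bridge-addable class of graphs and R_n uniform on G_n. For a connected graph H, let B_n be the set of graphs G ∈ G_n such that Frag(G) has a component isomorphic to H and frag(G) ≤ n/3. Then |B_n|/|G_n| ≤ 3·k_n(G,H)/(2·v(H)·n), where k_n(G,H) is the maximum number of vertex-disjoint copies of H in a graph of G_n. -/
set_option maxHeartbeats 1000000


attribute [local instance] Classical.propDecidable

/-- `S` is the vertex set of a connected component of `G`. -/
def IsCompSet {V : Type} (G : SimpleGraph V) (S : Set V) : Prop :=
  ∃ v : V, S = {u | G.Reachable u v}

/-- `B` is the vertex set of a component of `G` with the most vertices. -/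
def IsBigSet {V : Type} [Fintype V] (G : SimpleGraph V) (B : Set V) : Prop :=
  IsCompSet G B ∧ ∀ C : Set V, IsCompSet G C → C.ncard ≤ B.ncard

/-- A canonical choice of the vertex set of a biggest component of `G`. -/
noncomputable def bigSetOf {V : Type} [Fintype V] (G : SimpleGraph V) : Set V :=
  if h : ∃ B : Set V, IsBigSet G B then h.choose else ∅

/-- `G` contains `m` vertex-disjoint copies of `H` (as subgraphs). -/
def HasDisjCopies {h n : ℕ} (H : SimpleGraph (Fin h)) (G : SimpleGraph (Fin n))
    (m : ℕ) : Prop :=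
  ∃ φ : Fin m → (H →g G),
    Function.Injective (fun p : Fin m × Fin h => φ p.1 p.2)

/-- `k_n(𝒢,H)`: the maximum number of vertex-disjoint copies of `H` in a graph of
`𝒢_n`. -/
noncomputable def kMax (𝒢 : ∀ ⦃V : Type⦄ [Fintype V], SimpleGraph V → Prop)
    {h : ℕ} (H : SimpleGraph (Fin h)) (n : ℕ) : ℕ :=
  sSup {m | ∃ G : SimpleGraph (Fin n), 𝒢 G ∧ HasDisjCopies H G m}

lemma IsCompSet.mem_of_reachable {V : Type} {G : SimpleGraph V} {S : Set V}
    (hS : IsCompSet G S) {a b : V} (ha : a ∈ S) (hr : G.Reachable a b) : b ∈ S := by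
  obtain ⟨v, rfl⟩ := hS
  exact hr.symm.trans ha

lemma IsCompSet.reachable_of_mem {V : Type} {G : SimpleGraph V} {S : Set V}
    (hS : IsCompSet G S) {a b : V} (ha : a ∈ S) (hb : b ∈ S) : G.Reachable a b := by
  obtain ⟨v, rfl⟩ := hS
  exact Set.mem_setOf.mp ha |>.trans (Set.mem_setOf.mp hb).symm

lemma exists_boundary {V : Type} {G : SimpleGraph V} (S : Set V) :
    ∀ {x z : V} (_ : G.Walk x z), x ∈ S → z ∉ S →
      ∃ a b, G.Adj a b ∧ a ∈ S ∧ b ∉ S ∧ G.Reachable x a := by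
  intro x z w
  induction w with
  | nil => intro hx hz; exact absurd hx hz
  | cons h p ih =>
    intro hx hz
    rename_i xx yy zz
    by_cases hy : yy ∈ S
    · obtain ⟨a, b, hab, ha, hb, hr⟩ := ih hy hz
      exact ⟨a, b, hab, ha, hb, (h.reachable).trans hr⟩
    · exact ⟨xx, yy, h, hx, hy, SimpleGraph.Reachable.refl _⟩

lemma exists_isBigSet {V : Type} [Fintype V] [Nonempty V] (G : SimpleGraph V) :
    ∃ B : Set V, IsBigSet G B := by
  obtain ⟨v, -, hv⟩ := Finset.exists_max_image Finset.univ
    (fun v => Set.ncard {u | G.Reachable u v}) ⟨Classical.arbitrary V, Finset.mem_univ _⟩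
  refine ⟨{u | G.Reachable u v}, ⟨v, rfl⟩, ?_⟩
  rintro C ⟨w, rfl⟩
  exact hv w (Finset.mem_univ _)

lemma isBigSet_bigSetOf {V : Type} [Fintype V] [Nonempty V] (G : SimpleGraph V) :
    IsBigSet G (bigSetOf G) := by
  rw [bigSetOf, dif_pos (exists_isBigSet G)]
  exact (exists_isBigSet G).choose_spec

noncomputable def addE {n : ℕ} (G : SimpleGraph (Fin n)) (u v : Fin n) : SimpleGraph (Fin n) :=
  G ⊔ SimpleGraph.fromEdgeSet {s(u, v)}

lemma addE_adj {n : ℕ} {G : SimpleGraph (Fin n)} {u v a b : Fin n} :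
    (addE G u v).Adj a b ↔ G.Adj a b ∨ (s(a, b) = s(u, v) ∧ a ≠ b) := by
  simp [addE, SimpleGraph.fromEdgeSet_adj]

lemma le_addE {n : ℕ} (G : SimpleGraph (Fin n)) (u v : Fin n) : G ≤ addE G u v :=
  le_sup_left

lemma crossing {n : ℕ} {G' G1 K : SimpleGraph (Fin n)} {u1 v1 : Fin n} {S1 : Set (Fin n)}
    (h1 : G' = addE G1 u1 v1) (hS1 : IsCompSet G1 S1) (hu1 : u1 ∈ S1) (hv1n : v1 ∉ S1)
    (hle : K ≤ G') {a b : Fin n} (hab : K.Adj a b) (ha : a ∈ S1) (hb : b ∉ S1) :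
    a = u1 ∧ b = v1 := by
  have hG' : G'.Adj a b := hle hab
  rw [h1, addE_adj] at hG'
  rcases hG' with hG1 | ⟨hs, -⟩
  · exact absurd (hS1.mem_of_reachable ha hG1.reachable) hb
  · rcases Sym2.eq_iff.mp hs with ⟨rfl, rfl⟩ | ⟨rfl, rfl⟩
    · exact ⟨rfl, rfl⟩
    · exact absurd ha hv1n

lemma addE_cancel {n : ℕ} {G : SimpleGraph (Fin n)} {u v : Fin n}
    (hne : ¬ G.Adj u v) {a b : Fin n} :
    G.Adj a b ↔ ((addE G u v).Adj a b ∧ s(a, b) ≠ s(u, v)) := by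
  constructor
  · intro hab
    refine ⟨le_addE G u v hab, ?_⟩
    intro hs
    rcases Sym2.eq_iff.mp hs with ⟨rfl, rfl⟩ | ⟨rfl, rfl⟩
    · exact hne hab
    · exact hne hab.symm
  · rintro ⟨hab, hs⟩
    rw [addE_adj] at hab
    rcases hab with hab | ⟨hs', -⟩
    · exact hab
    · exact absurd hs' hs

lemma addE_left_inj {n : ℕ} {G1 G2 : SimpleGraph (Fin n)} {u1 v1 u2 v2 : Fin n}
    (heq : addE G1 u1 v1 = addE G2 u2 v2) (hs : s(u1, v1) = s(u2, v2))
    (h1 : ¬ G1.Adj u1 v1) (h2 : ¬ G2.Adj u2 v2) : G1 = G2 := by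
  ext a b
  rw [addE_cancel h1, addE_cancel h2, heq, hs]

lemma not_subset_case {n : ℕ} {G' G1 G2 : SimpleGraph (Fin n)} {u1 v1 u2 v2 : Fin n}
    {S1 S2 : Set (Fin n)}
    (h1 : G' = addE G1 u1 v1) (hS1 : IsCompSet G1 S1)
    (h2 : G' = addE G2 u2 v2) (hu2 : u2 ∈ S2) (hv2 : v2 ∈ bigSetOf G2)
    (hd2 : Disjoint S2 (bigSetOf G2))
    (hcard : S1.ncard ≤ S2.ncard)
    (hes : s(u1, v1) ≠ s(u2, v2))
    (hsub : S2 ⊆ S1) : False := by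
  have heq : S2 = S1 := Set.eq_of_subset_of_ncard_le hsub hcard (Set.toFinite _)
  subst heq
  have hv2n : v2 ∉ S2 := fun hv => (Set.disjoint_left.mp hd2 hv) hv2
  have huv : u2 ≠ v2 := fun h => hv2n (h ▸ hu2)
  have hadj : G'.Adj u2 v2 := by rw [h2, addE_adj]; exact Or.inr ⟨rfl, huv⟩
  rw [h1, addE_adj] at hadj
  rcases hadj with hG1 | ⟨hs, -⟩
  · exact hv2n (hS1.mem_of_reachable hu2 hG1.reachable)
  · exact hes hs.symm

lemma disj_of_ne {n : ℕ} {G' G1 G2 : SimpleGraph (Fin n)} {u1 v1 u2 v2 : Fin n}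
    {S1 S2 : Set (Fin n)}
    (h1 : G' = addE G1 u1 v1) (hS1 : IsCompSet G1 S1) (hd1 : Disjoint S1 (bigSetOf G1))
    (hu1 : u1 ∈ S1) (hv1 : v1 ∈ bigSetOf G1)
    (h2 : G' = addE G2 u2 v2) (hS2 : IsCompSet G2 S2) (hd2 : Disjoint S2 (bigSetOf G2))
    (hu2 : u2 ∈ S2) (hv2 : v2 ∈ bigSetOf G2)
    (hB2 : IsCompSet G2 (bigSetOf G2))
    (hcard : S1.ncard = S2.ncard)
    (hlt : S1.ncard < (bigSetOf G2).ncard)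
    (hpairs : (u1, v1) ≠ (u2, v2)) : Disjoint S1 S2 := by
  have hv1n : v1 ∉ S1 := fun hv => (Set.disjoint_left.mp hd1 hv) hv1
  have hv2n : v2 ∉ S2 := fun hv => (Set.disjoint_left.mp hd2 hv) hv2
  have hna1 : ¬ G1.Adj u1 v1 := fun h => hv1n (hS1.mem_of_reachable hu1 h.reachable)
  have hna2 : ¬ G2.Adj u2 v2 := fun h => hv2n (hS2.mem_of_reachable hu2 h.reachable)
  rcases eq_or_ne s(u1, v1) s(u2, v2) with hs | hes
  · -- same edge: either same pair (excluded) or swapped, giving a contradiction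
    rcases Sym2.eq_iff.mp hs with ⟨rfl, rfl⟩ | ⟨rfl, rfl⟩
    · exact absurd rfl hpairs
    · have hGeq : G1 = G2 := addE_left_inj (h1 ▸ h2) hs hna1 hna2
      subst hGeq
      exact absurd (Set.disjoint_left.mp hd1 hu1) (fun h => h hv2)
  · by_contra hnd
    obtain ⟨x, hx1, hx2⟩ := Set.not_disjoint_iff.mp hnd
    -- S1 ⊄ S2 and S2 ⊄ S1
    have hns12 : ¬ S1 ⊆ S2 := fun hsub =>
      not_subset_case h2 hS2 h1 hu1 hv1 hd1 hcard.ge hes.symm hsub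
    have hns21 : ¬ S2 ⊆ S1 := fun hsub =>
      not_subset_case h1 hS1 h2 hu2 hv2 hd2 hcard.le hes hsub
    obtain ⟨z, hz2, hz1⟩ := Set.not_subset.mp hns21
    obtain ⟨y, hy1, hy2⟩ := Set.not_subset.mp hns12
    have hle2 : G2 ≤ G' := h2 ▸ le_addE G2 u2 v2
    have hle1 : G1 ≤ G' := h1 ▸ le_addE G1 u1 v1
    -- walk 1 : u1 ∈ S2
    have hu1S2 : u1 ∈ S2 := by
      obtain ⟨w⟩ := hS2.reachable_of_mem hx2 hz2
      obtain ⟨a, b, hab, ha, hb, hr⟩ := exists_boundary S1 w hx1 hz1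
      obtain ⟨rfl, rfl⟩ := crossing h1 hS1 hu1 hv1n hle2 hab ha hb
      exact hS2.mem_of_reachable hx2 hr
    -- walk 2 : v2 ∈ S1
    have hv2S1 : v2 ∈ S1 := by
      obtain ⟨w⟩ := hS1.reachable_of_mem hx1 hy1
      obtain ⟨a, b, hab, ha, hb, hr⟩ := exists_boundary S2 w hx2 hy2
      have hc : a = u2 ∧ b = v2 := crossing h2 hS2 hu2 hv2n hle1 hab ha hb
      obtain ⟨rfl, rfl⟩ := hc
      exact hS1.mem_of_reachable hx1 (hr.trans hab.reachable)
    -- walk 3 : u1 ∈ bigSetOf G2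
    have hu1B2 : u1 ∈ bigSetOf G2 := by
      obtain ⟨w, hw, hwn⟩ : ∃ w, w ∈ bigSetOf G2 ∧ w ∉ S1 := by
        by_contra hcon
        push_neg at hcon
        exact absurd (Set.ncard_le_ncard hcon (Set.toFinite _)) (by omega)
      obtain ⟨wk⟩ := hB2.reachable_of_mem hv2 hw
      obtain ⟨a, b, hab, ha, hb, hr⟩ := exists_boundary S1 wk hv2S1 hwn
      obtain ⟨rfl, rfl⟩ := crossing h1 hS1 hu1 hv1n hle2 hab ha hb
      exact hB2.mem_of_reachable hv2 hr
    exact (Set.disjoint_left.mp hd2 hu1S2) hu1B2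

lemma hasDisjCopies_of {h n m : ℕ} {H : SimpleGraph (Fin h)} {G' : SimpleGraph (Fin n)}
    (S : Fin m → Set (Fin n)) (hd : ∀ i j, i ≠ j → Disjoint (S i) (S j))
    (f : Fin m → (H →g G')) (hinj : ∀ i, Function.Injective (f i))
    (hrange : ∀ i a, f i a ∈ S i) : HasDisjCopies H G' m := by
  refine ⟨f, ?_⟩
  rintro ⟨i, a⟩ ⟨j, b⟩ hfab
  simp only at hfab
  rcases eq_or_ne i j with rfl | hij
  · exact Prod.ext rfl (hinj i hfab)
  · exact absurd (hfab ▸ hrange i a) (fun hmem => (Set.disjoint_left.mp (hd i j hij) hmem) (hrange j b))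

lemma le_kMax (𝒢 : ∀ ⦃V : Type⦄ [Fintype V], SimpleGraph V → Prop)
    {h n m : ℕ} (hh : 0 < h) {H : SimpleGraph (Fin h)} {G : SimpleGraph (Fin n)}
    (hG : 𝒢 G) (hm : HasDisjCopies H G m) : m ≤ kMax 𝒢 H n := by
  apply le_csSup
  · refine ⟨n, ?_⟩
    rintro m' ⟨G', -, φ, hφ⟩
    have hcard := Fintype.card_le_of_injective _ hφ
    simp only [Fintype.card_prod, Fintype.card_fin] at hcard
    calc m' ≤ m' * h := Nat.le_mul_of_pos_right m' hh
    _ ≤ n := hcard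
  · exact ⟨G, hG, hm⟩

lemma ncard_of_induce_iso {n h : ℕ} {G : SimpleGraph (Fin n)} {S : Set (Fin n)}
    {H : SimpleGraph (Fin h)} (e : G.induce S ≃g H) : S.ncard = h := by
  rw [← Nat.card_coe_set_eq]
  simpa using Nat.card_congr e.toEquiv

/-- Let `𝒢` be bridge-addable, `H` a connected graph on `h ≥ 1`
vertices, and `B_n` the set of graphs `G ∈ 𝒢_n` whose fragment has a component
isomorphic to `H` and with `frag(G) ≤ n/3`.  Then
`|B_n| / |𝒢_n| ≤ 3 k_n(𝒢,H) / (2 h n)`. -/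
theorem stmt_16 (𝒢 : ∀ ⦃V : Type⦄ [Fintype V], SimpleGraph V → Prop)
    (hba : ∀ (V : Type) [Fintype V] (G : SimpleGraph V) (u v : V),
      𝒢 G → ¬ G.Reachable u v → 𝒢 (G ⊔ SimpleGraph.fromEdgeSet {s(u, v)}))
    (n h : ℕ) (hh : 0 < h) (hn : 0 < n)
    (H : SimpleGraph (Fin h)) (hH : H.Connected)
    (hne : {G : SimpleGraph (Fin n) | 𝒢 G}.Nonempty) :
    (Set.ncard {G : SimpleGraph (Fin n) | 𝒢 G ∧
        3 * Set.ncard ((Set.univ : Set (Fin n)) \ bigSetOf G) ≤ n ∧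
        ∃ S : Set (Fin n), IsCompSet G S ∧ Disjoint S (bigSetOf G) ∧
          Nonempty (G.induce S ≃g H)} : ℝ) /
      (Set.ncard {G : SimpleGraph (Fin n) | 𝒢 G} : ℝ)
    ≤ 3 * (kMax 𝒢 H n : ℝ) / (2 * (h : ℝ) * (n : ℝ)) := by
  classical
  haveI : Nonempty (Fin n) := Fin.pos_iff_nonempty.mp hn
  set B : Set (SimpleGraph (Fin n)) := {G : SimpleGraph (Fin n) | 𝒢 G ∧
      3 * Set.ncard ((Set.univ : Set (Fin n)) \ bigSetOf G) ≤ n ∧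
      ∃ S : Set (Fin n), IsCompSet G S ∧ Disjoint S (bigSetOf G) ∧
        Nonempty (G.induce S ≃g H)} with hBdef
  set A : Set (SimpleGraph (Fin n)) := {G : SimpleGraph (Fin n) | 𝒢 G} with hAdef
  -- choice of the H-component
  let sOf : SimpleGraph (Fin n) → Set (Fin n) := fun G =>
    if hG : G ∈ B then hG.2.2.choose else ∅
  have sOf_spec : ∀ G (hG : G ∈ B), IsCompSet G (sOf G) ∧ Disjoint (sOf G) (bigSetOf G) ∧
      Nonempty (G.induce (sOf G) ≃g H) := by
    intro G hG
    have h' : sOf G = hG.2.2.choose := dif_pos hG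
    rw [h']
    exact hG.2.2.choose_spec
  have sOf_card : ∀ G, G ∈ B → (sOf G).ncard = h := fun G hG =>
    ncard_of_induce_iso (sOf_spec G hG).2.2.some
  have big_comp : ∀ G : SimpleGraph (Fin n), IsCompSet G (bigSetOf G) :=
    fun G => (isBigSet_bigSetOf G).1
  have frag_card : ∀ G : SimpleGraph (Fin n),
      (bigSetOf G).ncard + ((Set.univ : Set (Fin n)) \ bigSetOf G).ncard = n := by
    intro G
    rw [← Set.compl_eq_univ_diff, Set.ncard_add_ncard_compl]
    simp
  have sOf_le_frag : ∀ G, G ∈ B → h ≤ ((Set.univ : Set (Fin n)) \ bigSetOf G).ncard := by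
    intro G hG
    rw [← sOf_card G hG]
    refine Set.ncard_le_ncard ?_ (Set.toFinite _)
    intro x hx
    exact ⟨trivial, fun hxb => (Set.disjoint_left.mp (sOf_spec G hG).2.1 hx) hxb⟩
  have big_lt : ∀ G, G ∈ B → h < (bigSetOf G).ncard := by
    intro G hG
    have h1 := frag_card G
    have h2 := hG.2.1
    have h3 := sOf_le_frag G hG
    omega
  have not_adj : ∀ G, G ∈ B → ∀ u v, u ∈ sOf G → v ∈ bigSetOf G → ¬ G.Reachable u v := by
    intro G hG u v hu hv hr
    have : u ∈ bigSetOf G := (big_comp G).mem_of_reachable hv hr.symm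
    exact (Set.disjoint_left.mp (sOf_spec G hG).2.1 hu) this
  -- the counting set
  let T : Finset (SimpleGraph (Fin n) × Fin n × Fin n) :=
    (B.toFinset).biUnion (fun G => ({G} : Finset _) ×ˢ ((sOf G).toFinset ×ˢ (bigSetOf G).toFinset))
  have memT : ∀ p : SimpleGraph (Fin n) × Fin n × Fin n,
      p ∈ T ↔ p.1 ∈ B ∧ p.2.1 ∈ sOf p.1 ∧ p.2.2 ∈ bigSetOf p.1 := by
    rintro ⟨G, u, v⟩
    simp only [T, Finset.mem_biUnion, Finset.mem_product, Finset.mem_singleton,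
      Set.mem_toFinset]
    constructor
    · rintro ⟨G', hG', rfl, hu, hv⟩
      exact ⟨hG', hu, hv⟩
    · rintro ⟨hG, hu, hv⟩
      exact ⟨G, hG, rfl, hu, hv⟩
  have hTcard : T.card = ∑ G ∈ B.toFinset, (sOf G).toFinset.card * (bigSetOf G).toFinset.card := by
    rw [Finset.card_biUnion]
    · refine Finset.sum_congr rfl fun G _ => ?_
      rw [Finset.card_product, Finset.card_product, Finset.card_singleton, one_mul]
    · intro x _ y _ hxy
      simp only [Function.onFun]
      rw [Finset.disjoint_left]
      rintro ⟨G, u, v⟩ hp hq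
      rw [Finset.mem_product, Finset.mem_singleton] at hp hq
      exact hxy (hp.1.symm.trans hq.1)
  -- lower bound
  have lower : B.toFinset.card * (2 * n * h) ≤ 3 * T.card := by
    rw [hTcard, Finset.mul_sum]
    calc B.toFinset.card * (2 * n * h) = B.toFinset.card • (2 * n * h) := by rw [smul_eq_mul]
    _ ≤ ∑ G ∈ B.toFinset, 3 * ((sOf G).toFinset.card * (bigSetOf G).toFinset.card) := by
        refine Finset.card_nsmul_le_sum _ _ _ fun G hG => ?_
        rw [Set.mem_toFinset] at hG
        have h1 : (sOf G).toFinset.card = h := by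
          rw [← Set.ncard_eq_toFinset_card']; exact sOf_card G hG
        have h2 : 2 * n ≤ 3 * (bigSetOf G).toFinset.card := by
          rw [← Set.ncard_eq_toFinset_card']
          have := frag_card G
          have := hG.2.1
          omega
        rw [h1]
        calc 2 * n * h ≤ 3 * (bigSetOf G).toFinset.card * h :=
              Nat.mul_le_mul_right h h2
        _ = 3 * (h * (bigSetOf G).toFinset.card) := by ring
  -- the injection
  let Phi : SimpleGraph (Fin n) × Fin n × Fin n → SimpleGraph (Fin n) × Fin n × Fin n :=
    fun p => (addE p.1 p.2.1 p.2.2, p.2)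
  have hinjT : Set.InjOn Phi ↑T := by
    rintro ⟨G1, u1, v1⟩ hp ⟨G2, u2, v2⟩ hq heq
    rw [Finset.mem_coe, memT] at hp hq
    have e2 : (u1, v1) = (u2, v2) := congrArg Prod.snd heq
    obtain ⟨rfl, rfl⟩ := Prod.mk.inj e2
    have e1 : addE G1 u1 v1 = addE G2 u1 v1 := congrArg Prod.fst heq
    have hna1 : ¬ G1.Adj u1 v1 := fun hadj =>
      not_adj G1 hp.1 u1 v1 hp.2.1 hp.2.2 hadj.reachable
    have hna2 : ¬ G2.Adj u1 v1 := fun hadj =>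
      not_adj G2 hq.1 u1 v1 hq.2.1 hq.2.2 hadj.reachable
    have : G1 = G2 := addE_left_inj e1 rfl hna1 hna2
    rw [this]
  have hTimg : T.card = (T.image Phi).card := (Finset.card_image_of_injOn hinjT).symm
  have himgA : ∀ q ∈ T.image Phi, q.1 ∈ A.toFinset := by
    intro q hq
    obtain ⟨p, hp, rfl⟩ := Finset.mem_image.mp hq
    rw [memT] at hp
    rw [Set.mem_toFinset]
    exact hba (Fin n) p.1 p.2.1 p.2.2 hp.1.1 (not_adj p.1 hp.1 _ _ hp.2.1 hp.2.2)
  have fiberwise : (T.image Phi).card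
      = ∑ G' ∈ A.toFinset, ((T.image Phi).filter (fun q => q.1 = G')).card :=
    Finset.card_eq_sum_card_fiberwise himgA
  have fiber_le : ∀ G' ∈ A.toFinset,
      ((T.image Phi).filter (fun q => q.1 = G')).card ≤ kMax 𝒢 H n := by
    intro G' hG'
    rw [Set.mem_toFinset] at hG'
    set F := (T.image Phi).filter (fun q => q.1 = G') with hF
    let gOf : SimpleGraph (Fin n) × Fin n × Fin n → SimpleGraph (Fin n) := fun q =>
      if hq : q ∈ T.image Phi then (Finset.mem_image.mp hq).choose.1 else ⊥
    have gOf_spec : ∀ q ∈ F, gOf q ∈ B ∧ q.2.1 ∈ sOf (gOf q) ∧ q.2.2 ∈ bigSetOf (gOf q) ∧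
        addE (gOf q) q.2.1 q.2.2 = G' := by
      intro q hq
      rw [hF, Finset.mem_filter] at hq
      obtain ⟨hqi, hq1⟩ := hq
      have h' : gOf q = (Finset.mem_image.mp hqi).choose.1 := dif_pos hqi
      obtain ⟨hpT, hpeq⟩ := (Finset.mem_image.mp hqi).choose_spec
      rw [memT] at hpT
      have e2 : (Finset.mem_image.mp hqi).choose.2 = q.2 := by
        have := congrArg Prod.snd hpeq
        simpa only [Phi] using this
      have e1 : addE (Finset.mem_image.mp hqi).choose.1
          (Finset.mem_image.mp hqi).choose.2.1 (Finset.mem_image.mp hqi).choose.2.2 = G' := by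
        have := congrArg Prod.fst hpeq
        simp only [Phi] at this
        rw [this, hq1]
      refine ⟨h' ▸ hpT.1, ?_, ?_, ?_⟩
      · rw [h', ← e2]; exact hpT.2.1
      · rw [h', ← e2]; exact hpT.2.2
      · rw [h', ← e2]; exact e1
    have memF_fst : ∀ q ∈ F, q.1 = G' := by
      intro q hq
      rw [hF, Finset.mem_filter] at hq
      exact hq.2
    let e : Fin F.card → {q // q ∈ F} := F.equivFin.symm
    let Sf : Fin F.card → Set (Fin n) := fun i => sOf (gOf (e i).1)
    have hdisj : ∀ i j, i ≠ j → Disjoint (Sf i) (Sf j) := by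
      intro i j hij
      obtain ⟨hB1, hu1, hv1, hG1⟩ := gOf_spec (e i).1 (e i).2
      obtain ⟨hB2, hu2, hv2, hG2⟩ := gOf_spec (e j).1 (e j).2
      refine disj_of_ne (G' := G') hG1.symm (sOf_spec _ hB1).1 (sOf_spec _ hB1).2.1 hu1 hv1
        hG2.symm (sOf_spec _ hB2).1 (sOf_spec _ hB2).2.1 hu2 hv2 (big_comp _)
        (by rw [sOf_card _ hB1, sOf_card _ hB2]) ?_ ?_
      · rw [sOf_card _ hB1]; exact big_lt _ hB2
      · intro hpq
        apply hij
        have h2 : (e i).1.2 = (e j).1.2 := by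
          have a1 := congrArg Prod.fst hpq
          have a2 := congrArg Prod.snd hpq
          exact Prod.ext a1 a2
        have h1 : (e i).1.1 = (e j).1.1 := by
          rw [memF_fst _ (e i).2, memF_fst _ (e j).2]
        have : (e i) = (e j) := Subtype.ext (Prod.ext h1 h2)
        exact F.equivFin.symm.injective this
    have hex : ∀ i : Fin F.card, ∃ f : H →g G', Function.Injective ⇑f ∧ ∀ a, f a ∈ Sf i := by
      intro i
      obtain ⟨hB1, hu1, hv1, hG1⟩ := gOf_spec (e i).1 (e i).2
      obtain ⟨hS, hd, hiso⟩ := sOf_spec _ hB1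
      obtain ⟨iso⟩ := hiso
      have hle : gOf (e i).1 ≤ G' := hG1 ▸ le_addE _ _ _
      refine ⟨⟨fun a => ((iso.symm a : _) : Fin n), ?_⟩, ?_, ?_⟩
      · intro a b hab
        exact hle ((iso.symm.map_adj_iff).mpr hab)
      · intro a b hab
        exact iso.symm.injective (Subtype.coe_injective hab)
      · intro a
        exact (iso.symm a).2
    choose f finj fmem using hex
    exact le_kMax 𝒢 hh hG' (hasDisjCopies_of Sf hdisj f finj fmem)
  have upper : T.card ≤ A.toFinset.card * kMax 𝒢 H n := by
    rw [hTimg, fiberwise]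
    exact le_trans (Finset.sum_le_card_nsmul _ _ _ fiber_le) (le_of_eq (smul_eq_mul _ _))
  have key : B.toFinset.card * (2 * n * h) ≤ 3 * (A.toFinset.card * kMax 𝒢 H n) := by
    calc B.toFinset.card * (2 * n * h) ≤ 3 * T.card := lower
    _ ≤ 3 * (A.toFinset.card * kMax 𝒢 H n) := Nat.mul_le_mul_left 3 upper
  have hA0 : 0 < A.toFinset.card := Finset.card_pos.mpr (Set.toFinset_nonempty.mpr hne)
  have hBn : B.ncard = B.toFinset.card := Set.ncard_eq_toFinset_card' B
  have hAn : A.ncard = A.toFinset.card := Set.ncard_eq_toFinset_card' A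
  rw [hBn, hAn, div_le_div_iff₀ (by exact_mod_cast hA0)
    (by positivity)]
  have keyR : (B.toFinset.card : ℝ) * (2 * n * h) ≤ 3 * (A.toFinset.card * kMax 𝒢 H n) := by
    exact_mod_cast key
  calc (B.toFinset.card : ℝ) * (2 * h * n) = B.toFinset.card * (2 * n * h) := by ring
  _ ≤ 3 * (A.toFinset.card * kMax 𝒢 H n) := keyR
  _ = 3 * (kMax 𝒢 H n) * A.toFinset.card := by ring
end

section
/- Let G be a trimmable class of graphs with G^{δ≥2} nonempty, let A be the class of graphs H such that for every graph G disjoint from H: G ∈ G ⇔ G ∪ H ∈ G (graphs addable and removable in G), and let B be the analogous class for G^{δ≥2}. Then B = A^{δ≥2}, i.e., B equals the class of graphs in A with minimum degree at least 2. -/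
/-!
A graph `H` of `ℬ` has minimum degree at least 2, since adding it to a graph of `𝒢^{δ≥2}` must
keep the minimum degree at least 2. For such `H` the core of `G ∪ H` is `Core(G) ∪ H`, so for
trimmable `𝒢` both `G ∈ 𝒢` and `G ∪ H ∈ 𝒢` are decided on the graphs `Core(G)` and
`Core(G) ∪ H` of minimum degree at least 2, where membership in `𝒢` and in `𝒢^{δ≥2}` coincide;
hence `ℬ ⊆ 𝒜`. Conversely `𝒜^{δ≥2} ⊆ ℬ` because `G ∪ H` has minimum degree at least 2 iff `G`
does.
-/

attribute [local instance] Classical.propDecidable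

/-- The disjoint union of two graphs. -/
def sumGraph {V W : Type} (G : SimpleGraph V) (H : SimpleGraph W) :
    SimpleGraph (V ⊕ W) :=
  SimpleGraph.fromRel (fun x y =>
    (∃ a b, x = Sum.inl a ∧ y = Sum.inl b ∧ G.Adj a b) ∨
    (∃ a b, x = Sum.inr a ∧ y = Sum.inr b ∧ H.Adj a b))

/-- `G` has minimum degree at least 2. -/
def MinDeg2 {V : Type} (G : SimpleGraph V) : Prop :=
  ∀ v : V, 2 ≤ Set.ncard (G.neighborSet v)

/-- The vertex set of the 2-core of `G`. -/
def coreSet {V : Type} (G : SimpleGraph V) : Set V :=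
  {v | ∃ W : Set V, v ∈ W ∧ ∀ u ∈ W, 2 ≤ Set.ncard {w | w ∈ W ∧ G.Adj u w}}

/-- `𝒢` is trimmable: a graph is in `𝒢` iff its 2-core is. -/
def Trimmable (𝒢 : ∀ ⦃V : Type⦄ [Fintype V], SimpleGraph V → Prop) : Prop :=
  ∀ (V : Type) [Fintype V] (G : SimpleGraph V), 𝒢 G ↔ 𝒢 (G.induce (coreSet G))

/-- `H` is addable and removable in `𝒞`: for every graph `G`,
`G ∈ 𝒞 ↔ G ∪ H ∈ 𝒞` (disjoint union). -/
def AddRem (𝒞 : ∀ ⦃V : Type⦄ [Fintype V], SimpleGraph V → Prop)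
    {W : Type} [Fintype W] (H : SimpleGraph W) : Prop :=
  ∀ (V : Type) [Fintype V] (G : SimpleGraph V), 𝒞 G ↔ 𝒞 (sumGraph G H)

open SimpleGraph Set

section

variable {V W : Type} {G : SimpleGraph V} {H : SimpleGraph W}

theorem sumGraph_eq_sum (G : SimpleGraph V) (H : SimpleGraph W) : sumGraph G H = G ⊕g H := by
  ext (a | b) (a' | b') <;> simp [sumGraph]
  all_goals exact ⟨fun h => h.2.elim id .symm, fun h => ⟨h.ne, .inl h⟩⟩

def MinDeg2On (G : SimpleGraph V) (S : Set V) : Prop :=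
  ∀ u ∈ S, 2 ≤ (S ∩ G.neighborSet u).ncard

theorem mem_coreSet_iff {v : V} : v ∈ coreSet G ↔ ∃ S, v ∈ S ∧ MinDeg2On G S := Iff.rfl

theorem image_val_neighborSet_induce (S : Set V) (u : S) :
    Subtype.val '' (G.induce S).neighborSet u = S ∩ G.neighborSet u := by
  ext w
  constructor
  · rintro ⟨w, hw, rfl⟩
    exact ⟨w.2, hw⟩
  · rintro ⟨hw, huw⟩
    exact ⟨⟨w, hw⟩, huw, rfl⟩

theorem ncard_neighborSet_induce (S : Set V) (u : S) :
    ((G.induce S).neighborSet u).ncard = (S ∩ G.neighborSet u).ncard := by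
  rw [← image_val_neighborSet_induce, ncard_image_of_injective _ Subtype.val_injective]

theorem minDeg2_induce_iff {S : Set V} : MinDeg2 (G.induce S) ↔ MinDeg2On G S := by
  simp only [MinDeg2, MinDeg2On, Subtype.forall, ncard_neighborSet_induce]

theorem minDeg2_iff_minDeg2On_univ : MinDeg2 G ↔ MinDeg2On G univ := by
  simp [MinDeg2, MinDeg2On]

theorem MinDeg2On.subset_coreSet {S : Set V} (hS : MinDeg2On G S) : S ⊆ coreSet G :=
  fun _ hv => ⟨S, hv, hS⟩

theorem minDeg2On_coreSet [Finite V] : MinDeg2On G (coreSet G) := by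
  intro u hu
  obtain ⟨S, huS, hS⟩ := mem_coreSet_iff.mp hu
  exact (hS u huS).trans <| ncard_le_ncard
    (inter_subset_inter_left _ hS.subset_coreSet) (toFinite _)

theorem minDeg2_induce_coreSet [Finite V] : MinDeg2 (G.induce (coreSet G)) :=
  minDeg2_induce_iff.mpr minDeg2On_coreSet

theorem coreSet_eq_univ_of_minDeg2 (hG : MinDeg2 G) : coreSet G = univ :=
  eq_univ_of_univ_subset (minDeg2_iff_minDeg2On_univ.mp hG).subset_coreSet

theorem minDeg2On_sum_iff {X : Set (V ⊕ W)} :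
    MinDeg2On (G ⊕g H) X ↔ MinDeg2On G (Sum.inl ⁻¹' X) ∧ MinDeg2On H (Sum.inr ⁻¹' X) := by
  simp only [MinDeg2On, Sum.forall, mem_preimage, neighborSet_sum_inl, neighborSet_sum_inr,
    ← image_preimage_inter, ncard_image_of_injective _ Sum.inl_injective,
    ncard_image_of_injective _ Sum.inr_injective]

theorem minDeg2_sum_iff : MinDeg2 (G ⊕g H) ↔ MinDeg2 G ∧ MinDeg2 H := by
  simp only [minDeg2_iff_minDeg2On_univ, minDeg2On_sum_iff, preimage_univ]

theorem preimage_inl_coreSet_sum : Sum.inl ⁻¹' coreSet (G ⊕g H) = coreSet G := by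
  ext v
  constructor
  · rintro ⟨X, hvX, hX⟩
    exact ⟨_, hvX, (minDeg2On_sum_iff.mp hX).1⟩
  · rintro ⟨S, hvS, hS⟩
    refine ⟨Sum.inl '' S, mem_image_of_mem _ hvS, minDeg2On_sum_iff.mpr ⟨?_, ?_⟩⟩
    · rwa [preimage_image_eq _ Sum.inl_injective]
    · simp [preimage_inr_image_inl, MinDeg2On]

theorem preimage_inr_coreSet_sum : Sum.inr ⁻¹' coreSet (G ⊕g H) = coreSet H := by
  ext w
  constructor
  · rintro ⟨X, hwX, hX⟩
    exact ⟨_, hwX, (minDeg2On_sum_iff.mp hX).2⟩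
  · rintro ⟨T, hwT, hT⟩
    refine ⟨Sum.inr '' T, mem_image_of_mem _ hwT, minDeg2On_sum_iff.mpr ⟨?_, ?_⟩⟩
    · simp [preimage_inl_image_inr, MinDeg2On]
    · rwa [preimage_image_eq _ Sum.inr_injective]

def SimpleGraph.Iso.induceSum (G : SimpleGraph V) (H : SimpleGraph W) (X : Set (V ⊕ W)) :
    (G ⊕g H).induce X ≃g G.induce (Sum.inl ⁻¹' X) ⊕g H.induce (Sum.inr ⁻¹' X) where
  toEquiv := Equiv.subtypeSum
  map_rel_iff' := by rintro ⟨a | b, _⟩ ⟨a' | b', _⟩ <;> simp [Equiv.subtypeSum]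

theorem nonempty_iso_induce_coreSet_sum (G : SimpleGraph V) (hH : MinDeg2 H) :
    Nonempty ((G ⊕g H).induce (coreSet (G ⊕g H)) ≃g G.induce (coreSet G) ⊕g H) := by
  have e := Iso.induceSum G H (coreSet (G ⊕g H))
  rw [preimage_inl_coreSet_sum, preimage_inr_coreSet_sum, coreSet_eq_univ_of_minDeg2 hH] at e
  exact ⟨e.trans (Iso.sumCongr .refl H.induceUnivIso)⟩

end

section

variable {𝒞 : ∀ ⦃V : Type⦄ [Fintype V], SimpleGraph V → Prop}

def IsoInvariant (𝒞 : ∀ ⦃V : Type⦄ [Fintype V], SimpleGraph V → Prop) : Prop :=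
  ∀ (V W : Type) [Fintype V] [Fintype W] (G : SimpleGraph V) (H : SimpleGraph W),
    Nonempty (G ≃g H) → 𝒞 G → 𝒞 H

theorem IsoInvariant.iff (h𝒞 : IsoInvariant 𝒞) {V W : Type} [Fintype V] [Fintype W]
    {G : SimpleGraph V} {H : SimpleGraph W} (e : G ≃g H) : 𝒞 G ↔ 𝒞 H :=
  ⟨h𝒞 _ _ _ _ ⟨e⟩, h𝒞 _ _ _ _ ⟨e.symm⟩⟩

variable {W : Type} [Fintype W] {H : SimpleGraph W}

theorem addRem_iff_sum :
    AddRem 𝒞 H ↔ ∀ (V : Type) [Fintype V] (G : SimpleGraph V), 𝒞 G ↔ 𝒞 (G ⊕g H) := by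
  simp only [AddRem, sumGraph_eq_sum]

theorem Trimmable.sum_iff_sum_induce_coreSet (htrim : Trimmable 𝒞) (hiso : IsoInvariant 𝒞)
    (hH : MinDeg2 H) {V : Type} [Fintype V] (G : SimpleGraph V) :
    𝒞 (G ⊕g H) ↔ 𝒞 (G.induce (coreSet G) ⊕g H) := by
  obtain ⟨e⟩ := nonempty_iso_induce_coreSet_sum G hH
  exact (htrim _ _).trans (hiso.iff e)

theorem AddRem.minDeg2 (hA : AddRem 𝒞 H) (hH : MinDeg2 H) :
    AddRem (fun {V : Type} [Fintype V] (G : SimpleGraph V) => 𝒞 G ∧ MinDeg2 G) H := by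
  rw [addRem_iff_sum] at *
  intro V _ G
  rw [minDeg2_sum_iff, hA V G]
  tauto

theorem minDeg2_of_addRem_minDeg2 {V₀ : Type} [Fintype V₀] {G₀ : SimpleGraph V₀}
    (hG₀ : 𝒞 G₀ ∧ MinDeg2 G₀)
    (hB : AddRem (fun {V : Type} [Fintype V] (G : SimpleGraph V) => 𝒞 G ∧ MinDeg2 G) H) :
    MinDeg2 H :=
  (minDeg2_sum_iff.mp ((addRem_iff_sum.mp hB V₀ G₀).mp hG₀).2).2

theorem AddRem.of_minDeg2 (htrim : Trimmable 𝒞) (hiso : IsoInvariant 𝒞)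
    (hB : AddRem (fun {V : Type} [Fintype V] (G : SimpleGraph V) => 𝒞 G ∧ MinDeg2 G) H)
    (hH : MinDeg2 H) : AddRem 𝒞 H := by
  rw [addRem_iff_sum] at *
  intro V _ G
  have hK : MinDeg2 (G.induce (coreSet G)) := minDeg2_induce_coreSet
  calc 𝒞 G ↔ 𝒞 (G.induce (coreSet G)) := htrim V G
    _ ↔ 𝒞 (G.induce (coreSet G) ⊕g H) := by
      simpa [hK, hH, minDeg2_sum_iff] using hB _ (G.induce (coreSet G))
    _ ↔ 𝒞 (G ⊕g H) := (htrim.sum_iff_sum_induce_coreSet hiso hH G).symm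

end

/-- Let `𝒢` be a trimmable class (closed under isomorphism) with
`𝒢^{δ≥2}` containing a non-null graph, `𝒜` the class of graphs addable and
removable in `𝒢`, and `ℬ` the class of graphs addable and removable in `𝒢^{δ≥2}`.
Then `ℬ = 𝒜^{δ≥2}`. -/
theorem stmt_17 (𝒢 : ∀ ⦃V : Type⦄ [Fintype V], SimpleGraph V → Prop)
    (hiso : ∀ (V W : Type) [Fintype V] [Fintype W] (G : SimpleGraph V)
      (H : SimpleGraph W), Nonempty (G ≃g H) → 𝒢 G → 𝒢 H)
    (htrim : Trimmable 𝒢)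
    (hne : ∃ (n : ℕ) (G : SimpleGraph (Fin n)), 0 < n ∧ 𝒢 G ∧ MinDeg2 G)
    (W : Type) [Fintype W] (H : SimpleGraph W) :
    AddRem (fun {V : Type} [Fintype V] (G : SimpleGraph V) => 𝒢 G ∧ MinDeg2 G) H ↔
      (AddRem 𝒢 H ∧ MinDeg2 H) := by
  obtain ⟨n, G₀, -, hG₀⟩ := hne
  constructor
  · intro hB
    have hH : MinDeg2 H := minDeg2_of_addRem_minDeg2 hG₀ hB
    exact ⟨hB.of_minDeg2 htrim hiso hH, hH⟩
  · rintro ⟨hA, hH⟩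
    exact hA.minDeg2 hH
end
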